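/- arXiv:1809.10216 — 10 statements merged into one kernel-verified Lean document; each statement's English description precedes it below -/
import Mathlib

section
/- There exist disjoint Borel sets P, N ⊆ ℝ such that the Lebesgue measure of ℝ \ (P ∪ N) is zero, and for every nonempty bounded open interval I ⊆ ℝ both I ∩ P and I ∩ N have strictly positive Lebesgue measure. -/
/-! Enumerate the open intervals with rational endpoints, each twice, and choose inductively inside
the `n`-th interval a closed nowhere dense set of positive measure avoiding the sets chosen before:
their union is closed and nowhere dense, so it misses an open subinterval, and a closed set of
positive measure minus a small open neighbourhood of the rationals is again such a set. Let `P` be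
the union of the sets chosen at the first copies of the intervals and `N = Pᶜ`; the sets chosen at
the second copies lie in `N`. -/

open MeasureTheory Set Function TopologicalSpace

theorem IsNowhereDense.union {X : Type*} [TopologicalSpace X] {s t : Set X}
    (hs : IsNowhereDense s) (ht : IsNowhereDense t) : IsNowhereDense (s ∪ t) := by
  have hs' := isClosed_isNowhereDense_iff_compl.1 ⟨isClosed_closure, hs.closure⟩
  have ht' := isClosed_isNowhereDense_iff_compl.1 ⟨isClosed_closure, ht.closure⟩
  have hst : IsNowhereDense (closure s ∪ closure t) := by
    refine (isClosed_isNowhereDense_iff_compl.2 ?_).2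
    rw [compl_union]
    exact ⟨hs'.1.inter ht'.1, hs'.2.inter_of_isOpen_left ht'.2 hs'.1⟩
  exact hst.mono (union_subset_union subset_closure subset_closure)

section Regular

variable {X : Type*} [TopologicalSpace X] [SeparableSpace X] [MeasurableSpace X]
  (μ : Measure X) [μ.WeaklyRegular] [NullSingletonClass μ] [μ.IsOpenPosMeasure]

theorem IsOpen.exists_isClosed_isNowhereDense_subset_measure_pos {U : Set X} (hU : IsOpen U)
    (hne : U.Nonempty) : ∃ K ⊆ U, IsClosed K ∧ IsNowhereDense K ∧ 0 < μ K := by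
  obtain ⟨F, hFU, hF, hμF⟩ := hU.exists_lt_isClosed (hU.measure_pos μ hne)
  obtain ⟨D, hDc, hDd⟩ := exists_countable_dense X
  -- removing a small open neighbourhood of a countable dense set kills the interior
  obtain ⟨V, hDV, hV, hμV⟩ := exists_isOpen_lt_of_lt D (μ F) (by rwa [hDc.measure_zero μ])
  refine ⟨F \ V, sdiff_subset.trans hFU, hF.sdiff hV, ?_, ?_⟩
  · rw [(hF.sdiff hV).isNowhereDense_iff, ← subset_empty_iff, ← hDd.interior_compl]
    exact interior_mono fun x hx hxD => hx.2 (hDV hxD)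
  · exact (tsub_pos_of_lt hμV).trans_le le_measure_sdiff

theorem exists_pairwise_disjoint_isClosed_subset_measure_pos_nat {W : ℕ → Set X}
    (hWo : ∀ n, IsOpen (W n)) (hWn : ∀ n, (W n).Nonempty) :
    ∃ K : ℕ → Set X, Pairwise (Disjoint on K) ∧
      ∀ n, K n ⊆ W n ∧ IsClosed (K n) ∧ 0 < μ (K n) := by
  have step (n : ℕ) (S : Set X) (hS : IsClosed S) (hSn : IsNowhereDense S) :
      ∃ K ⊆ W n \ S, IsClosed K ∧ IsNowhereDense K ∧ 0 < μ K := by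
    have hSd := (isClosed_isNowhereDense_iff_compl.1 ⟨hS, hSn⟩).2
    exact ((hWo n).sdiff hS).exists_isClosed_isNowhereDense_subset_measure_pos μ
      (hSd.inter_open_nonempty _ (hWo n) (hWn n))
  choose! K hKW hKc hKnd hKpos using step
  let S : ℕ → Set X := fun n => Nat.rec ∅ (fun k s => s ∪ K k s) n
  have hS : ∀ n, IsClosed (S n) ∧ IsNowhereDense (S n) := by
    intro n
    induction n with
    | zero => exact ⟨isClosed_empty, isNowhereDense_empty⟩
    | succ n ih => exact ⟨ih.1.union (hKc n _ ih.1 ih.2), ih.2.union (hKnd n _ ih.1 ih.2)⟩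
  have hmono : Monotone S := monotone_nat_of_le_succ fun n => subset_union_left
  have hdisj {m n : ℕ} (hmn : m < n) : Disjoint (K m (S m)) (K n (S n)) := by
    have hm : K m (S m) ⊆ S n := subset_union_right.trans (hmono hmn)
    exact disjoint_of_subset_left hm (subset_sdiff.1 (hKW n _ (hS n).1 (hS n).2)).2.symm
  refine ⟨fun n => K n (S n), fun m n hmn => ?_, fun n => ?_⟩
  · rcases hmn.lt_or_gt with h | h
    exacts [hdisj h, (hdisj h).symm]
  · obtain ⟨hc, hnd⟩ := hS n
    exact ⟨(hKW n _ hc hnd).trans sdiff_subset, hKc n _ hc hnd, hKpos n _ hc hnd⟩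

theorem exists_pairwise_disjoint_isClosed_subset_measure_pos {ι : Type*} [Countable ι]
    {W : ι → Set X} (hWo : ∀ i, IsOpen (W i)) (hWn : ∀ i, (W i).Nonempty) :
    ∃ K : ι → Set X, Pairwise (Disjoint on K) ∧
      ∀ i, K i ⊆ W i ∧ IsClosed (K i) ∧ 0 < μ (K i) := by
  cases isEmpty_or_nonempty ι
  · exact ⟨fun _ => ∅, fun i => isEmptyElim i, isEmptyElim⟩
  obtain ⟨f, hf⟩ := exists_surjective_nat ι
  obtain ⟨K, hK, hKW⟩ :=
    exists_pairwise_disjoint_isClosed_subset_measure_pos_nat μ (fun n => hWo (f n)) (hWn <| f ·)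
  refine ⟨K ∘ surjInv hf, hK.comp_of_injective (injective_surjInv hf), fun i => ?_⟩
  simpa only [comp_apply, surjInv_eq hf i] using hKW (surjInv hf i)

end Regular

theorem interleaved_sets :
    ∃ P N : Set ℝ, MeasurableSet P ∧ MeasurableSet N ∧ Disjoint P N ∧
      volume (univ \ (P ∪ N)) = 0 ∧
      ∀ a b : ℝ, a < b →
        0 < volume (Ioo a b ∩ P) ∧ 0 < volume (Ioo a b ∩ N) := by
  obtain ⟨K, hdisj, hK⟩ := exists_pairwise_disjoint_isClosed_subset_measure_pos volume
    (W := fun i : {pq : ℚ × ℚ // pq.1 < pq.2} × Bool => Ioo (i.1.1.1 : ℝ) i.1.1.2)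
    (fun _ => isOpen_Ioo) fun i => nonempty_Ioo.2 (Rat.cast_lt.2 i.1.2)
  set P := ⋃ I, K (I, true)
  have hP : MeasurableSet P := .iUnion fun I => (hK _).2.1.measurableSet
  refine ⟨P, Pᶜ, hP, hP.compl, disjoint_compl_right, by simp, fun a b hab => ?_⟩
  obtain ⟨p, hap, hpb⟩ := exists_rat_btwn hab
  obtain ⟨q, hpq, hqb⟩ := exists_rat_btwn hpb
  let I : {pq : ℚ × ℚ // pq.1 < pq.2} := ⟨(p, q), Rat.cast_lt.1 hpq⟩
  have hIab : Ioo (p : ℝ) q ⊆ Ioo a b := Ioo_subset_Ioo hap.le hqb.le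
  refine ⟨(hK (I, true)).2.2.trans_le (measure_mono ?_),
    (hK (I, false)).2.2.trans_le (measure_mono ?_)⟩
  · exact subset_inter ((hK _).1.trans hIab) (subset_iUnion (fun J => K (J, true)) I)
  · refine subset_inter ((hK _).1.trans hIab) ?_
    simp only [P, compl_iUnion, subset_iInter_iff]
    exact fun J => (hdisj (by simp)).subset_compl_right
end

section
/- Let P, N ⊆ ℝ be disjoint Borel sets with |ℝ \ (P ∪ N)| = 0 such that every nonempty open interval meets both P and N in positive measure. Define f(τ) = 2 + ∫₀^τ (𝟙_P(r) − 𝟙_N(r)) dr. Then for all x < y in [0,1], |f(y) − f(x)| < |y − x|. -/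
/-!
On `[x, y]` the integrand `𝟙_P - 𝟙_N` integrates to `|[x,y] ∩ P| - |[x,y] ∩ N|`. Both terms are
positive, so the absolute value of their difference is strictly less than their sum, which by
disjointness is at most `|[x,y]| = y - x`.
-/

open MeasureTheory Set

section

variable {X : Type*} [MeasurableSpace X] {μ : Measure X} {s P N : Set X}

theorem setIntegral_indicator_one_sub_indicator_one (hP : MeasurableSet P)
    (hN : MeasurableSet N) (hs : μ s ≠ ⊤) :
    ∫ r in s, (P.indicator (fun _ => (1:ℝ)) r - N.indicator (fun _ => (1:ℝ)) r) ∂μ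
      = μ.real (s ∩ P) - μ.real (s ∩ N) := by
  have : IsFiniteMeasure (μ.restrict s) := isFiniteMeasure_restrict.mpr hs
  rw [integral_sub ((integrable_const 1).indicator hP) ((integrable_const 1).indicator hN),
    integral_indicator_const _ hP, integral_indicator_const _ hN,
    measureReal_restrict_apply hP, measureReal_restrict_apply hN, inter_comm P, inter_comm N]
  simp only [smul_eq_mul, mul_one]

theorem abs_measureReal_inter_sub_lt (hdisj : Disjoint P N) (hN : MeasurableSet N)
    (hs_meas : MeasurableSet s) (hs : μ s ≠ ⊤) (hsP : 0 < μ (s ∩ P)) (hsN : 0 < μ (s ∩ N)) :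
    |μ.real (s ∩ P) - μ.real (s ∩ N)| < μ.real s := by
  have hsP_fin : μ (s ∩ P) ≠ ⊤ := measure_ne_top_of_subset inter_subset_left hs
  have hsN_fin : μ (s ∩ N) ≠ ⊤ := measure_ne_top_of_subset inter_subset_left hs
  have hsP_pos : 0 < μ.real (s ∩ P) := ENNReal.toReal_pos hsP.ne' hsP_fin
  have hsN_pos : 0 < μ.real (s ∩ N) := ENNReal.toReal_pos hsN.ne' hsN_fin
  have hsum : μ.real (s ∩ P) + μ.real (s ∩ N) ≤ μ.real s := by
    rw [← measureReal_union (hdisj.mono inter_subset_right inter_subset_right)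
      (hs_meas.inter hN)]
    exact measureReal_mono (union_subset inter_subset_left inter_subset_left) hs
  rw [abs_sub_lt_iff]
  constructor <;> linarith

end

theorem intervalIntegrable_indicator_one {μ : Measure ℝ} [IsLocallyFiniteMeasure μ] {S : Set ℝ}
    (hS : MeasurableSet S) {a b : ℝ} :
    IntervalIntegrable (S.indicator (fun _ => (1:ℝ))) μ a b :=
  intervalIntegrable_iff.mpr ((integrableOn_const measure_Ioc_lt_top.ne).indicator hS)

theorem f_strict_contraction_general
    (P N : Set ℝ) (hP : MeasurableSet P) (hN : MeasurableSet N)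
    (hdisj : Disjoint P N)
    (hpos : ∀ a b : ℝ, a < b →
      0 < volume (Ioo a b ∩ P) ∧ 0 < volume (Ioo a b ∩ N))
    (f : ℝ → ℝ)
    (hf : ∀ τ : ℝ, f τ = 2 + ∫ r in (0:ℝ)..τ,
      (P.indicator (fun _ => (1:ℝ)) r - N.indicator (fun _ => (1:ℝ)) r)) :
    ∀ x y : ℝ, x ∈ Icc (0:ℝ) 1 → y ∈ Icc (0:ℝ) 1 → x < y →
      |f y - f x| < |y - x| := by
  intro x y _ _ hxy
  have hint : ∀ a b : ℝ, IntervalIntegrable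
      (fun r => P.indicator (fun _ => (1:ℝ)) r - N.indicator (fun _ => (1:ℝ)) r) volume a b :=
    fun a b => (intervalIntegrable_indicator_one hP).sub (intervalIntegrable_indicator_one hN)
  have hdiff : f y - f x = volume.real (Ioc x y ∩ P) - volume.real (Ioc x y ∩ N) := by
    rw [hf, hf, add_sub_add_left_eq_sub, intervalIntegral.integral_interval_sub_left
      (hint 0 y) (hint 0 x), intervalIntegral.integral_of_le hxy.le]
    exact setIntegral_indicator_one_sub_indicator_one hP hN measure_Ioc_lt_top.ne
  have hIoo_le : ∀ S : Set ℝ, volume (Ioo x y ∩ S) ≤ volume (Ioc x y ∩ S) :=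
    fun S => measure_mono (inter_subset_inter_left _ Ioo_subset_Ioc_self)
  rw [hdiff, abs_of_pos (sub_pos.mpr hxy), ← Real.volume_real_Ioc_of_le hxy.le]
  exact abs_measureReal_inter_sub_lt hdisj hN measurableSet_Ioc measure_Ioc_lt_top.ne
    ((hpos x y hxy).1.trans_le (hIoo_le P)) ((hpos x y hxy).2.trans_le (hIoo_le N))

theorem f_strict_contraction
    (P N : Set ℝ) (hP : MeasurableSet P) (hN : MeasurableSet N)
    (hdisj : Disjoint P N)
    (hconull : volume (univ \ (P ∪ N)) = 0)
    (hpos : ∀ a b : ℝ, a < b →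
      0 < volume (Ioo a b ∩ P) ∧ 0 < volume (Ioo a b ∩ N))
    (f : ℝ → ℝ)
    (hf : ∀ τ : ℝ, f τ = 2 + ∫ r in (0:ℝ)..τ,
      (P.indicator (fun _ => (1:ℝ)) r - N.indicator (fun _ => (1:ℝ)) r)) :
    ∀ x y : ℝ, x ∈ Icc (0:ℝ) 1 → y ∈ Icc (0:ℝ) 1 → x < y →
      |f y - f x| < |y - x| :=
  f_strict_contraction_general P N hP hN hdisj hpos f hf
end

section
/- Let P, N ⊆ ℝ be disjoint Borel sets with |ℝ \ (P ∪ N)| = 0 such that every nonempty open interval meets both P and N in positive measure, and let f(τ) = 2 + ∫₀^τ (𝟙_P − 𝟙_N). Then f is not monotone on any nonempty open subinterval of (0,1). -/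
/-! By the Lebesgue differentiation theorem, `f' = 𝟙_P - 𝟙_N` almost everywhere. The
derivative of a monotone function is nonnegative wherever it exists, yet `f' = -1` on `N`,
which meets every interval in positive measure; symmetrically for antitone `f` with `P`. -/

open MeasureTheory Set Filter

theorem measure_inter_eq_zero_of_monotoneOn {μ : Measure ℝ} {F F' : ℝ → ℝ} {U S : Set ℝ}
    (hU : IsOpen U) (hF : MonotoneOn F U) (hF' : ∀ᵐ x ∂μ, HasDerivAt F (F' x) x)
    (hS : ∀ x ∈ S, F' x < 0) : μ (U ∩ S) = 0 := by
  rw [measure_eq_zero_iff_ae_notMem]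
  filter_upwards [hF'] with x hx ⟨hxU, hxS⟩
  have hacc : AccPt x (𝓟 U) := by
    simpa using (PerfectSpace.univ_preperfect x (mem_univ x)).nhds_inter (hU.mem_nhds hxU)
  exact (hS x hxS).not_ge (hx.hasDerivWithinAt.nonneg_of_monotoneOn hacc hF)

theorem f_nowhere_monotone_general
    (P N : Set ℝ) (hP : MeasurableSet P) (hN : MeasurableSet N)
    (hdisj : Disjoint P N)
    (hpos : ∀ a b : ℝ, a < b →
      0 < volume (Ioo a b ∩ P) ∧ 0 < volume (Ioo a b ∩ N))
    (f : ℝ → ℝ)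
    (hf : ∀ τ : ℝ, f τ = 2 + ∫ r in (0:ℝ)..τ,
      (P.indicator (fun _ => (1:ℝ)) r - N.indicator (fun _ => (1:ℝ)) r)) :
    ∀ a b : ℝ, 0 ≤ a → a < b → b ≤ 1 →
      ¬ (MonotoneOn f (Ioo a b) ∨ AntitoneOn f (Ioo a b)) := by
  intro a b _ hab _ hmono
  set g : ℝ → ℝ := fun r =>
    P.indicator (fun _ => (1:ℝ)) r - N.indicator (fun _ => (1:ℝ)) r
  have hderiv : ∀ᵐ x, HasDerivAt f (g x) x := by
    have hg : LocallyIntegrable g volume :=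
      ((locallyIntegrable_const 1).indicator hP).sub ((locallyIntegrable_const 1).indicator hN)
    filter_upwards [LocallyIntegrable.ae_hasDerivAt_integral hg] with x hx
    rw [show f = _ from funext hf]
    exact (hx 0).const_add 2
  rcases hmono with hmono | hanti
  · refine (hpos a b hab).2.ne'
      (measure_inter_eq_zero_of_monotoneOn isOpen_Ioo hmono hderiv ?_)
    intro x hx
    simp [g, hx, hdisj.notMem_of_mem_right hx]
  · refine (hpos a b hab).1.ne' (measure_inter_eq_zero_of_monotoneOn isOpen_Ioo hanti.neg
      (hderiv.mono fun x hx => hx.neg) ?_)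
    intro x hx
    simp [g, hx, hdisj.notMem_of_mem_left hx]

theorem f_nowhere_monotone
    (P N : Set ℝ) (hP : MeasurableSet P) (hN : MeasurableSet N)
    (hdisj : Disjoint P N)
    (hconull : volume (univ \ (P ∪ N)) = 0)
    (hpos : ∀ a b : ℝ, a < b →
      0 < volume (Ioo a b ∩ P) ∧ 0 < volume (Ioo a b ∩ N))
    (f : ℝ → ℝ)
    (hf : ∀ τ : ℝ, f τ = 2 + ∫ r in (0:ℝ)..τ,
      (P.indicator (fun _ => (1:ℝ)) r - N.indicator (fun _ => (1:ℝ)) r)) :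
    ∀ a b : ℝ, 0 ≤ a → a < b → b ≤ 1 →
      ¬ (MonotoneOn f (Ioo a b) ∨ AntitoneOn f (Ioo a b)) :=
  f_nowhere_monotone_general P N hP hN hdisj hpos f hf
end

section
/- Let g : (0,1) → ℝ be Lipschitz with g'(x) ≠ 0 for a.e. x, and suppose the essential supremum over t ∈ ℝ of the cardinality of g⁻¹({t}) is finite. Then there exists a nonempty open interval I ⊆ (0,1) on which g is strictly monotone. -/
/-!
Suppose `g` were strictly monotone on no subinterval. Being continuous, it is then injective on
no subinterval, and since `g' ≠ 0` a.e. it is constant on none, so every subinterval contains a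
hump `x < z < y` with `g x = g y ≠ g z`; by the intermediate value theorem every value between
`g x` and `g z` is taken both on `(x, z)` and on `(z, y)`. Choosing the hump inside the preimage
of a given value interval and recursing into `(x, z)`, one finds for every `n` an interval of
values each of which has at least `n` preimages. With `n = M + 1` this set of values has positive
measure, contradicting the a.e. bound on the number of preimages.
-/

open MeasureTheory Set

section

variable {α δ : Type*} [LinearOrder α] {f : α → δ}

def HasHumpOn (f : α → δ) (s : Set α) : Prop :=
  ∃ x ∈ s, ∃ y ∈ s, ∃ z ∈ Ioo x y, f x = f y ∧ f z ≠ f x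

theorem hasHumpOn_of_not_injOn {s : Set α} (hinj : ¬ InjOn f s)
    (hconst : ∀ x ∈ s, ∀ y ∈ s, x < y → ∃ z ∈ Ioo x y, f z ≠ f x) : HasHumpOn f s := by
  obtain ⟨x, hx, y, hy, hxy, hne⟩ : ∃ x ∈ s, ∃ y ∈ s, f x = f y ∧ x ≠ y := by
    simpa [InjOn] using hinj
  rcases hne.lt_or_gt with hlt | hlt
  · obtain ⟨z, hz, hzx⟩ := hconst x hx y hy hlt
    exact ⟨x, hx, y, hy, z, hz, hxy, hzx⟩
  · obtain ⟨z, hz, hzy⟩ := hconst y hy x hx hlt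
    exact ⟨y, hy, x, hx, z, hz, hxy.symm, hxy ▸ hzy⟩

end

section

variable {α δ : Type*} [ConditionallyCompleteLinearOrder α] [TopologicalSpace α] [OrderTopology α]
  [DenselyOrdered α] [LinearOrder δ] [TopologicalSpace δ] [OrderClosedTopology δ] {f : α → δ}

theorem intermediate_value_uIoo {a b : α} (hab : a ≤ b) (hf : ContinuousOn f (Icc a b)) :
    uIoo (f a) (f b) ⊆ f '' Ioo a b := by
  rcases le_total (f a) (f b) with h | h
  · rw [uIoo_of_le h]
    exact intermediate_value_Ioo hab hf
  · rw [uIoo_of_ge h]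
    exact intermediate_value_Ioo' hab hf

theorem uIoo_subset_image_Ioo_of_eq {x y z : α} (hf : ContinuousOn f (Icc x y)) (hz : z ∈ Ioo x y)
    (hxy : f x = f y) : uIoo (f x) (f z) ⊆ f '' Ioo x z ∧ uIoo (f x) (f z) ⊆ f '' Ioo z y := by
  refine ⟨intermediate_value_uIoo hz.1.le (hf.mono (Icc_subset_Icc_right hz.2.le)), ?_⟩
  rw [uIoo_comm, hxy]
  exact intermediate_value_uIoo hz.2.le (hf.mono (Icc_subset_Icc_left hz.1.le))

theorem exists_Ioo_forall_le_encard_preimage [Nontrivial α] [DenselyOrdered δ] (n : ℕ)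
    {W : Set α} (hW : IsOpen W) (hf : ContinuousOn f W)
    (hhump : ∀ u v, u < v → Ioo u v ⊆ W → HasHumpOn f (Ioo u v))
    {a b : δ} (hab : ∃ r ∈ W, f r ∈ Ioo a b) :
    ∃ a' b', a' < b' ∧ Ioo a' b' ⊆ Ioo a b ∧ ∀ t ∈ Ioo a' b', n ≤ (f ⁻¹' {t} ∩ W).encard := by
  induction n generalizing W a b with
  | zero =>
    obtain ⟨r, -, hr⟩ := hab
    exact ⟨a, b, hr.1.trans hr.2, subset_rfl, fun _ _ => by simp⟩
  | succ n ih =>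
    obtain ⟨r, hrW, hr⟩ := hab
    obtain ⟨u, v, huv, huvW⟩ :=
      (hf.isOpen_inter_preimage hW isOpen_Ioo).exists_Ioo_subset ⟨r, hrW, hr⟩
    obtain ⟨x, hx, y, hy, z, hz, hxy, hzx⟩ := hhump u v huv (huvW.trans inter_subset_left)
    have hxyW : Icc x y ⊆ W ∩ f ⁻¹' Ioo a b := (Icc_subset_Ioo hx.1 hy.2).trans huvW
    have hxyW' : Icc x y ⊆ W := hxyW.trans inter_subset_left
    have hxzW : Ioo x z ⊆ W := fun w hw => hxyW' ⟨hw.1.le, hw.2.le.trans hz.2.le⟩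
    obtain ⟨hleft, hright⟩ := uIoo_subset_image_Ioo_of_eq (hf.mono hxyW') hz hxy
    obtain ⟨s, hs⟩ : (uIoo (f x) (f z)).Nonempty := nonempty_Ioo.2 (inf_lt_sup.2 hzx.symm)
    obtain ⟨q, hq, rfl⟩ := hleft hs
    obtain ⟨a', b', hab', hsub, hcount⟩ := ih isOpen_Ioo (hf.mono hxzW)
      (fun u v huv h => hhump u v huv (h.trans hxzW)) ⟨q, hq, hs⟩
    have hxab := (hxyW (left_mem_Icc.2 (hz.1.trans hz.2).le)).2
    have hzab := (hxyW (Ioo_subset_Icc_self hz)).2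
    refine ⟨a', b', hab', hsub.trans (Ioo_subset_Ioo (le_inf hxab.1.le hzab.1.le)
      (sup_le hxab.2.le hzab.2.le)), fun t ht => ?_⟩
    obtain ⟨w, hw, rfl⟩ := hright (hsub ht)
    have hwW : w ∈ W := hxyW' ⟨hz.1.le.trans hw.1.le, hw.2.le⟩
    calc ((n + 1 : ℕ) : ℕ∞) ≤ (f ⁻¹' {f w} ∩ Ioo x z).encard + 1 := by
          push_cast; gcongr; exact hcount _ ht
      _ = (insert w (f ⁻¹' {f w} ∩ Ioo x z)).encard :=
          (encard_insert_of_notMem fun h => (h.2.2.trans hw.1).false).symm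
      _ ≤ (f ⁻¹' {f w} ∩ W).encard :=
          encard_le_encard (insert_subset ⟨rfl, hwW⟩ (inter_subset_inter_right _ hxzW))

end

theorem exists_ne_of_ae_deriv_ne_zero {F : Type*} [NormedAddCommGroup F] [NormedSpace ℝ F]
    {g : ℝ → F} {μ : Measure ℝ} [μ.IsOpenPosMeasure] {s U : Set ℝ}
    (hder : ∀ᵐ x ∂μ.restrict s, deriv g x ≠ 0) (hU : IsOpen U) (hUne : U.Nonempty) (hUs : U ⊆ s)
    (c : F) : ∃ z ∈ U, g z ≠ c := by
  by_contra! hconst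
  obtain ⟨z, hz, hdz⟩ := Measure.exists_mem_of_measure_ne_zero_of_ae (hU.measure_ne_zero μ hUne)
    (ae_restrict_of_ae_restrict_of_subset hUs hder)
  have hloc : g =ᶠ[nhds z] fun _ => c := Filter.eventuallyEq_of_mem (hU.mem_nhds hz) hconst
  exact hdz (by rw [hloc.deriv_eq, deriv_const])

theorem somewhere_monotone
    (g : ℝ → ℝ) (K : NNReal) (hg : LipschitzOnWith K g (Ioo 0 1))
    (hder : ∀ᵐ x ∂(volume.restrict (Ioo (0:ℝ) 1)),
      HasDerivAt g (deriv g x) x ∧ deriv g x ≠ 0)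
    (M : ℕ)
    (hcard : ∀ᵐ t : ℝ, (g ⁻¹' {t} ∩ Ioo 0 1).Finite ∧
      (g ⁻¹' {t} ∩ Ioo 0 1).ncard ≤ M) :
    ∃ a b : ℝ, 0 ≤ a ∧ a < b ∧ b ≤ 1 ∧
      (StrictMonoOn g (Ioo a b) ∨ StrictAntiOn g (Ioo a b)) := by
  by_contra! hmono
  have hcont : ContinuousOn g (Ioo 0 1) := hg.continuousOn
  have hhump : ∀ u v, u < v → Ioo u v ⊆ Ioo 0 1 → HasHumpOn g (Ioo u v) := by
    intro u v huv huv01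
    obtain ⟨hu, hv⟩ := (Ioo_subset_Ioo_iff huv).1 huv01
    refine hasHumpOn_of_not_injOn (fun hinj => ?_) fun x hx y hy hxy => ?_
    · rcases (hcont.mono huv01).strictMonoOn_of_injOn_Ioo huv hinj with h | h
      exacts [(hmono u v hu huv hv).1 h, (hmono u v hu huv hv).2 h]
    · exact exists_ne_of_ae_deriv_ne_zero (hder.mono fun _ h => h.2) isOpen_Ioo
        (nonempty_Ioo.2 hxy) ((Ioo_subset_Ioo hx.1.le hy.2.le).trans huv01) (g x)
  obtain ⟨a, b, hab, -, hmany⟩ := exists_Ioo_forall_le_encard_preimage (M + 1) isOpen_Ioo hcont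
    hhump (a := g (1 / 2) - 1) (b := g (1 / 2) + 1) ⟨1 / 2, by norm_num, by simp⟩
  obtain ⟨t, ht, hfin, hle⟩ := Measure.exists_mem_of_measure_ne_zero_of_ae
    (isOpen_Ioo.measure_ne_zero volume (nonempty_Ioo.2 hab)) (ae_restrict_of_ae hcard)
  have hmany_t := hmany t ht
  rw [← hfin.cast_ncard_eq] at hmany_t
  norm_cast at hmany_t
  omega
end

section
/- Suppose b : ℝ^d → ℝ^d is uniformly bounded and satisfies the two-sided Osgood condition: |⟨b(x) − b(y), x − y⟩| ≤ C ‖x − y‖ ρ(‖x − y‖) for all x, y, where C ≥ 0 and ρ : [0,∞) → [0,∞) is continuous, non-decreasing with ρ(0) = 0. Then b is continuous. -/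
/-!
Let `L` be a cluster value of `b` at `x`. Passing to the limit in the Osgood inequality
shows that `L` satisfies the same bound against every `b y` as `b x` does. Testing both
bounds at `y = x - (t / ‖L - b x‖) • (L - b x)` and subtracting gives `‖L - b x‖ ≤ 2 ω t`
for every `t > 0`, where `ω t = C ρ t → 0`; hence `L = b x`. Since `b` takes values in a compact ball, having
`b x` as its only cluster value at `x` means `b` is continuous at `x`.
-/

open Set Filter Topology

theorem MapClusterPt.prodMk_of_tendsto {α X Y : Type*} [TopologicalSpace X] [TopologicalSpace Y]
    {l : Filter α} {u : α → X} {f : α → Y} {x : X} {y : Y}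
    (hf : MapClusterPt y l f) (hu : Tendsto u l (𝓝 x)) :
    MapClusterPt (x, y) l (fun a => (u a, f a)) := by
  rw [((𝓝 x).basis_sets.prod_nhds (𝓝 y).basis_sets).mapClusterPt_iff_frequently]
  rintro ⟨s, t⟩ ⟨hs, ht⟩
  exact ((hf.frequently ht).and_eventually (hu hs)).mono fun _ h => ⟨h.2, h.1⟩

section Osgood

variable {E : Type*} [NormedAddCommGroup E] [InnerProductSpace ℝ E] {ω : ℝ → ℝ}

theorem eq_of_forall_abs_inner_sub_le (hω : Tendsto ω (𝓝[>] 0) (𝓝 0)) {g : E → E}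
    {x L L' : E}
    (hL : ∀ y, |inner ℝ (L - g y) (x - y)| ≤ ‖x - y‖ * ω ‖x - y‖)
    (hL' : ∀ y, |inner ℝ (L' - g y) (x - y)| ≤ ‖x - y‖ * ω ‖x - y‖) :
    L = L' := by
  by_contra hne
  set z := L - L'
  have hz : 0 < ‖z‖ := norm_pos_iff.mpr (sub_ne_zero.mpr hne)
  have hbound : ∀ t > 0, ‖z‖ ≤ 2 * ω t := by
    intro t ht
    set v := (t / ‖z‖) • z
    have hv : ‖v‖ = t := by
      rw [norm_smul, Real.norm_of_nonneg (by positivity), div_mul_cancel₀ _ hz.ne']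
    have hzv : inner ℝ z v = t * ‖z‖ := by
      rw [real_inner_smul_right, real_inner_self_eq_norm_sq]
      field_simp
    have h1 := hL (x - v)
    have h2 := hL' (x - v)
    rw [sub_sub_cancel, hv] at h1 h2
    have : t * ‖z‖ ≤ t * (2 * ω t) := calc
      t * ‖z‖ = inner ℝ (L - g (x - v)) v - inner ℝ (L' - g (x - v)) v := by
        rw [← hzv, ← inner_sub_left, sub_sub_sub_cancel_right]
      _ ≤ |inner ℝ (L - g (x - v)) v| + |inner ℝ (L' - g (x - v)) v| :=
        (le_abs_self _).trans (abs_sub _ _)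
      _ ≤ t * ω t + t * ω t := add_le_add h1 h2
      _ = t * (2 * ω t) := by ring
    exact le_of_mul_le_mul_left this ht
  have hlim : ‖z‖ ≤ 2 * 0 :=
    ge_of_tendsto (hω.const_mul 2) (eventually_nhdsWithin_of_forall hbound)
  linarith

variable {b : E → E}

theorem abs_inner_sub_le_of_mapClusterPt (hω : ContinuousOn ω (Ici 0))
    (hb : ∀ x y, |inner ℝ (b x - b y) (x - y)| ≤ ‖x - y‖ * ω ‖x - y‖)
    {x L : E} (hL : MapClusterPt L (𝓝 x) b) (y : E) :
    |inner ℝ (L - b y) (x - y)| ≤ ‖x - y‖ * ω ‖x - y‖ := by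
  have hω' : Continuous fun p : E × E => ω ‖p.1 - y‖ :=
    hω.comp_continuous (by fun_prop) fun _ => norm_nonneg _
  have hclosed : IsClosed
      {p : E × E | |inner ℝ (p.2 - b y) (p.1 - y)| ≤ ‖p.1 - y‖ * ω ‖p.1 - y‖} :=
    isClosed_le (by fun_prop) ((continuous_fst.sub continuous_const).norm.mul hω')
  exact hclosed.mem_of_mapClusterPt (hL.prodMk_of_tendsto tendsto_id)
    (Eventually.of_forall fun x' => hb x' y)

theorem continuous_of_abs_inner_sub_le [ProperSpace E] {M : ℝ} (hbd : ∀ x, ‖b x‖ ≤ M)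
    (hω : ContinuousOn ω (Ici 0)) (hω0 : ω 0 = 0)
    (hb : ∀ x y, |inner ℝ (b x - b y) (x - y)| ≤ ‖x - y‖ * ω ‖x - y‖) :
    Continuous b := by
  have hω0' : Tendsto ω (𝓝[>] 0) (𝓝 0) := by
    simpa only [hω0] using (hω 0 self_mem_Ici).tendsto.mono_left
      (nhdsWithin_mono _ Ioi_subset_Ici_self)
  refine continuous_iff_continuousAt.mpr fun x => ?_
  refine (isCompact_closedBall 0 M).tendsto_nhds_of_unique_mapClusterPt
    (Eventually.of_forall fun x' => mem_closedBall_zero_iff.mpr (hbd x')) fun L _ hL => ?_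
  exact eq_of_forall_abs_inner_sub_le hω0' (abs_inner_sub_le_of_mapClusterPt hω hb hL) (hb x)

end Osgood

theorem osgood_bounded_implies_continuous_general
    (d : ℕ) (b : EuclideanSpace ℝ (Fin d) → EuclideanSpace ℝ (Fin d))
    (M : ℝ) (hbd : ∀ x, ‖b x‖ ≤ M)
    (C : ℝ)
    (ρ : ℝ → ℝ) (hρc : ContinuousOn ρ (Ici 0))
    (hρ0 : ρ 0 = 0)
    (hosgood : ∀ x y, |(inner ℝ (b x - b y) (x - y) : ℝ)| ≤ C * ‖x - y‖ * ρ ‖x - y‖) :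
    Continuous b := by
  refine continuous_of_abs_inner_sub_le (ω := fun t => C * ρ t) hbd
    (continuousOn_const.mul hρc) (by simp [hρ0]) fun x y => (hosgood x y).trans_eq (by ring)

theorem osgood_bounded_implies_continuous
    (d : ℕ) (b : EuclideanSpace ℝ (Fin d) → EuclideanSpace ℝ (Fin d))
    (M : ℝ) (hbd : ∀ x, ‖b x‖ ≤ M)
    (C : ℝ) (hC : 0 ≤ C)
    (ρ : ℝ → ℝ) (hρc : ContinuousOn ρ (Ici 0)) (hρm : MonotoneOn ρ (Ici 0))
    (hρ0 : ρ 0 = 0) (hρpos : ∀ s ∈ Ici (0:ℝ), 0 ≤ ρ s)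
    (hosgood : ∀ x y, |(inner ℝ (b x - b y) (x - y) : ℝ)| ≤ C * ‖x - y‖ * ρ ‖x - y‖) :
    Continuous b :=
  osgood_bounded_implies_continuous_general d b M hbd C ρ hρc hρ0 hosgood
end

section
/- Let b : ℝ → ℝ be continuous with b > 0 on (α, β), b(α) = b(β) = 0, and suppose the ODE γ' = b(γ) has unique solutions through every point. With F(x) = ∫_{x₀}^x dr/b(r), we have F(x) → −∞ as x → α⁺ and F(x) → +∞ as x → β⁻. -/
/-!
The inverse of `F`, extended by `α` to the left of the range of `F` and by `β` to its right, is a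
continuous solution of `γ' = b(γ)` on all of `ℝ`: inside `(α, β)` by the inverse function theorem,
and where it meets `α` or `β` because these are zeros of `b`. If `F` were bounded above (below),
this solution would reach `β` (`α`) in finite time, and uniqueness would force it to be constant.
-/

open Set Filter Topology

theorem abs_sub_le_of_hasDerivAt_uIoo {f f' : ℝ → ℝ} {a b C : ℝ}
    (hf : ContinuousOn f (uIcc a b)) (hf' : ∀ u ∈ uIoo a b, HasDerivAt f (f' u) u)
    (hC : ∀ u ∈ uIoo a b, |f' u| ≤ C) : |f b - f a| ≤ C * |b - a| := by
  wlog hab : a < b generalizing a b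
  · rcases (not_lt.1 hab).eq_or_lt with rfl | hba
    · simp
    rw [abs_sub_comm, abs_sub_comm b]
    rw [uIcc_comm] at hf
    rw [uIoo_comm] at hf' hC
    exact this hf hf' hC hba
  rw [uIcc_of_le hab.le] at hf
  rw [uIoo_of_lt hab] at hf' hC
  obtain ⟨ζ, hζ, hslope⟩ := exists_hasDerivAt_eq_slope f f' hab hf hf'
  have hba : 0 < b - a := sub_pos.2 hab
  rw [← div_le_iff₀ (abs_pos.2 hba.ne'), ← abs_div, ← hslope]
  exact hC ζ hζ

theorem hasDerivAt_of_hasDerivAt_off_equilibrium {b γ : ℝ → ℝ} {c t : ℝ}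
    (hb : Continuous b) (hγ : Continuous γ) (hbc : b c = 0) (hγt : γ t = c)
    (hode : ∀ᶠ y in 𝓝 t, γ y ≠ c → HasDerivAt γ (b (γ y)) y) :
    HasDerivAt γ (b (γ t)) t := by
  rw [hγt, hbc, hasDerivAt_iff_isLittleO, Asymptotics.isLittleO_iff]
  intro ε hε
  have hsmall : ∀ᶠ y in 𝓝 t, |b (γ y)| < ε := by
    have := (hb.comp hγ).continuousAt (x := t)
    simpa [ContinuousAt, hγt, hbc, Function.comp_def, dist_eq_norm] using
      Metric.tendsto_nhds.1 this ε hε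
  obtain ⟨δ, hδ, hball⟩ := Metric.eventually_nhds_iff_ball.1 (hode.and hsmall)
  filter_upwards [Metric.ball_mem_nhds t hδ] with y hy
  -- between `y` and the zero `s` of `γ - c` nearest to it, `γ` solves the ODE with `|γ'| < ε`
  obtain ⟨s, ⟨hγs, hs⟩, hnearest⟩ :=
    (isCompact_uIcc.inter_left (isClosed_eq hγ continuous_const)).exists_isMinOn
      ⟨t, hγt, left_mem_uIcc⟩ (continuous_id.sub continuous_const).abs.continuousOn
      (f := fun u => |u - y|)
  have hsub : uIcc s y ⊆ Metric.ball t δ :=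
    (uIcc_subset_uIcc hs right_mem_uIcc).trans
      ((convex_ball t δ).ordConnected.uIcc_subset (Metric.mem_ball_self hδ) hy)
  have hoff : ∀ u ∈ uIoo s y, γ u ≠ c := by
    intro u hu hγu
    have hcloser : |u - y| < |s - y| := by
      rcases le_total s y with h | h
      · rw [uIoo_of_le h] at hu
        rw [abs_of_neg (sub_neg.2 hu.2), abs_of_nonpos (sub_nonpos.2 h)]
        linarith [hu.1]
      · rw [uIoo_of_ge h] at hu
        rw [abs_of_pos (sub_pos.2 hu.1), abs_of_nonneg (sub_nonneg.2 h)]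
        linarith [hu.2]
    exact (hnearest ⟨hγu, uIcc_subset_uIcc hs right_mem_uIcc (uIoo_subset_uIcc_self hu)⟩).not_gt
      hcloser
  have hlip := abs_sub_le_of_hasDerivAt_uIoo hγ.continuousOn
    (fun u hu => (hball u (hsub (uIoo_subset_uIcc_self hu))).1 (hoff u hu))
    (fun u hu => (hball u (hsub (uIoo_subset_uIcc_self hu))).2.le)
  simp only [smul_zero, sub_zero, Real.norm_eq_abs]
  calc |γ y - γ t| = |γ y - γ s| := by rw [hγs, hγt]
    _ ≤ ε * |y - s| := hlip
    _ ≤ ε * |y - t| := mul_le_mul_of_nonneg_left (abs_sub_right_of_mem_uIcc hs) hε.le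

/-- The generalized inverse of an increasing `F : (α, β) → ℝ`, equal to `α` below the range of
`F` and to `β` above it. -/
noncomputable def clampedInv (F : ℝ → ℝ) (α β t : ℝ) : ℝ :=
  sSup (insert α {x ∈ Ioo α β | F x ≤ t})

section clampedInv

variable {F : ℝ → ℝ} {α β : ℝ}

theorem insert_setOf_le_subset_Icc (hαβ : α ≤ β) (t : ℝ) :
    insert α {x ∈ Ioo α β | F x ≤ t} ⊆ Icc α β :=
  insert_subset ⟨le_rfl, hαβ⟩ fun _ hx => Ioo_subset_Icc_self hx.1

theorem clampedInv_mem_Icc (hαβ : α ≤ β) (t : ℝ) : clampedInv F α β t ∈ Icc α β :=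
  ⟨le_csSup (bddAbove_Icc.mono (insert_setOf_le_subset_Icc hαβ t)) (mem_insert _ _),
    csSup_le (insert_nonempty _ _) fun _ hx => (insert_setOf_le_subset_Icc hαβ t hx).2⟩

theorem monotone_clampedInv (hαβ : α ≤ β) : Monotone (clampedInv F α β) := fun _ t hst =>
  csSup_le_csSup (bddAbove_Icc.mono (insert_setOf_le_subset_Icc hαβ t)) (insert_nonempty _ _)
    (insert_subset_insert fun _ hx => ⟨hx.1, hx.2.trans hst⟩)

theorem clampedInv_apply (hF : StrictMonoOn F (Ioo α β)) {x : ℝ} (hx : x ∈ Ioo α β) :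
    clampedInv F α β (F x) = x := by
  refine IsGreatest.csSup_eq ⟨mem_insert_of_mem _ ⟨hx, le_rfl⟩, ?_⟩
  rintro z (rfl | ⟨hz, hzx⟩)
  exacts [hx.1.le, (hF.le_iff_le hz hx).1 hzx]

theorem clampedInv_of_forall_lt {t : ℝ} (h : ∀ x ∈ Ioo α β, t < F x) :
    clampedInv F α β t = α := by
  have : {x ∈ Ioo α β | F x ≤ t} = ∅ :=
    eq_empty_of_forall_notMem fun x hx => (h x hx.1).not_ge hx.2
  rw [clampedInv, this, insert_empty_eq, csSup_singleton]

theorem clampedInv_of_forall_le (hαβ : α < β) {t : ℝ} (h : ∀ x ∈ Ioo α β, F x ≤ t) :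
    clampedInv F α β t = β := by
  have : {x ∈ Ioo α β | F x ≤ t} = Ioo α β := sep_eq_self_iff_mem_true.2 h
  rw [clampedInv, this, Ioo_insert_left hαβ, csSup_Ico hαβ]

theorem continuous_clampedInv (hαβ : α < β) (hF : StrictMonoOn F (Ioo α β)) :
    Continuous (clampedInv F α β) := by
  let γ : ℝ → Icc α β := fun t => ⟨clampedInv F α β t, clampedInv_mem_Icc hαβ.le t⟩
  have hdense : DenseRange γ := by
    refine Subtype.dense_iff.2 fun x hx => ?_
    have : Ioo α β ⊆ (↑) '' range γ := fun x hx =>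
      ⟨γ (F x), mem_range_self _, clampedInv_apply hF hx⟩
    exact closure_mono this (by rwa [closure_Ioo hαβ.ne])
  have hmono : Monotone γ := fun _ _ hst => monotone_clampedInv hαβ.le hst
  exact continuous_subtype_val.comp (hmono.continuous_of_denseRange hdense)

theorem apply_clampedInv (hF : StrictMonoOn F (Ioo α β)) (hFc : ContinuousOn F (Ioo α β))
    {t : ℝ} (ht : clampedInv F α β t ∈ Ioo α β) : F (clampedInv F α β t) = t := by
  have hbdd := bddAbove_Icc.mono (insert_setOf_le_subset_Icc (F := F) (ht.1.trans ht.2).le t)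
  obtain ⟨x₁, hx₁, hx₁t⟩ : ∃ x₁ ∈ Ioo α β, F x₁ ≤ t := by
    obtain ⟨z, hz, hαz⟩ := exists_lt_of_lt_csSup (insert_nonempty _ _) ht.1
    rcases hz with rfl | hz
    exacts [(lt_irrefl _ hαz).elim, ⟨z, hz⟩]
  obtain ⟨x₂, hγx₂, hx₂β⟩ := exists_between ht.2
  have hx₂ : x₂ ∈ Ioo α β := ⟨ht.1.trans hγx₂, hx₂β⟩
  have htx₂ : t ≤ F x₂ := le_of_not_ge fun h =>
    hγx₂.not_ge (le_csSup hbdd (mem_insert_of_mem _ ⟨hx₂, h⟩))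
  have hx₁x₂ : x₁ ≤ x₂ := (le_csSup hbdd (mem_insert_of_mem _ ⟨hx₁, hx₁t⟩)).trans hγx₂.le
  have hsub : Icc x₁ x₂ ⊆ Ioo α β := Icc_subset_Ioo hx₁.1 hx₂.2
  obtain ⟨x, hx, rfl⟩ := intermediate_value_Icc hx₁x₂ (hFc.mono hsub) ⟨hx₁t, htx₂⟩
  rw [clampedInv_apply hF (hsub hx)]

end clampedInv

theorem strictMonoOn_Ioo_of_hasDerivAt_pos {f f' : ℝ → ℝ} {a b : ℝ}
    (hf : ∀ x ∈ Ioo a b, HasDerivAt f (f' x) x) (hf' : ∀ x ∈ Ioo a b, 0 < f' x) :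
    StrictMonoOn f (Ioo a b) :=
  strictMonoOn_of_hasDerivWithinAt_pos (convex_Ioo a b)
    (fun x hx => (hf x hx).continuousAt.continuousWithinAt)
    (fun x hx => (hf x (interior_subset hx)).hasDerivWithinAt)
    (fun x hx => hf' x (interior_subset hx))

theorem hasDerivAt_clampedInv {b F : ℝ → ℝ} {α β : ℝ} (hαβ : α < β) (hb : Continuous b)
    (hpos : ∀ x ∈ Ioo α β, 0 < b x) (hα : b α = 0) (hβ : b β = 0)
    (hF : ∀ x ∈ Ioo α β, HasDerivAt F (b x)⁻¹ x) (t : ℝ) :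
    HasDerivAt (clampedInv F α β) (b (clampedInv F α β t)) t := by
  set γ := clampedInv F α β
  have hFc : ContinuousOn F (Ioo α β) := fun x hx => (hF x hx).continuousAt.continuousWithinAt
  have hFmono : StrictMonoOn F (Ioo α β) :=
    strictMonoOn_Ioo_of_hasDerivAt_pos hF fun x hx => inv_pos.2 (hpos x hx)
  have hγc : Continuous γ := continuous_clampedInv hαβ hFmono
  have hinner : ∀ y, γ y ∈ Ioo α β → HasDerivAt γ (b (γ y)) y := by
    intro y hy
    have hinv : ∀ᶠ z in 𝓝 y, F (γ z) = z :=
      (hγc.continuousAt.eventually_mem (isOpen_Ioo.mem_nhds hy)).mono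
        fun z hz => apply_clampedInv hFmono hFc hz
    simpa using HasDerivAt.of_local_left_inverse hγc.continuousAt (hF _ hy)
      (inv_ne_zero (hpos _ hy).ne') hinv
  obtain ⟨hαt, htβ⟩ := clampedInv_mem_Icc (F := F) hαβ.le t
  rcases hαt.eq_or_lt with hαt | hαt
  · refine hasDerivAt_of_hasDerivAt_off_equilibrium hb hγc hα hαt.symm ?_
    filter_upwards [hγc.continuousAt.eventually (eventually_lt_nhds (hαt ▸ hαβ))]
      with y hyβ hyα
    exact hinner y ⟨(clampedInv_mem_Icc hαβ.le y).1.lt_of_ne' hyα, hyβ⟩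
  rcases htβ.eq_or_lt with htβ | htβ
  · refine hasDerivAt_of_hasDerivAt_off_equilibrium hb hγc hβ htβ ?_
    filter_upwards [hγc.continuousAt.eventually (eventually_gt_nhds (htβ ▸ hαβ))]
      with y hyα hyβ
    exact hinner y ⟨hyα, (clampedInv_mem_Icc hαβ.le y).2.lt_of_ne hyβ⟩
  exact hinner t ⟨hαt, htβ⟩

theorem hasDerivAt_integral_of_continuousOn {f : ℝ → ℝ} {s : Set ℝ} (hs : IsOpen s)
    (hs' : s.OrdConnected) (hf : ContinuousOn f s) {a x : ℝ} (ha : a ∈ s) (hx : x ∈ s) :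
    HasDerivAt (fun u => ∫ r in a..u, f r) (f x) x :=
  intervalIntegral.integral_hasDerivAt_right
    (hf.mono (hs'.uIcc_subset ha hx)).intervalIntegrable
    (hf.stronglyMeasurableAtFilter hs x hx) (hf.continuousAt (hs.mem_nhds hx))

theorem MonotoneOn.tendsto_nhdsLT_atTop {α β : Type*} [LinearOrder α] [TopologicalSpace α]
    [OrderTopology α] [LinearOrder β] {f : α → β} {a b : α} (hf : MonotoneOn f (Ioo a b))
    (hunbdd : ¬BddAbove (f '' Ioo a b)) : Tendsto f (𝓝[<] b) atTop := by
  refine tendsto_atTop.2 fun K => ?_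
  obtain ⟨_, ⟨x, hx, rfl⟩, hKx⟩ := not_bddAbove_iff.1 hunbdd K
  filter_upwards [Ioo_mem_nhdsLT hx.2] with y hy
  exact hKx.le.trans (hf hx ⟨hx.1.trans hy.1, hy.2⟩ hy.1.le)

theorem MonotoneOn.tendsto_nhdsGT_atBot {α β : Type*} [LinearOrder α] [TopologicalSpace α]
    [OrderTopology α] [LinearOrder β] {f : α → β} {a b : α} (hf : MonotoneOn f (Ioo a b))
    (hunbdd : ¬BddBelow (f '' Ioo a b)) : Tendsto f (𝓝[>] a) atBot := by
  refine tendsto_atBot.2 fun K => ?_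
  obtain ⟨_, ⟨x, hx, rfl⟩, hxK⟩ := not_bddBelow_iff.1 hunbdd K
  filter_upwards [Ioo_mem_nhdsGT hx.1] with y hy
  exact (hf ⟨hy.1, hy.2.trans hx.2⟩ hx hy.2.le).trans hxK.le

theorem F_blows_up
    (b : ℝ → ℝ) (hb : Continuous b) (α β : ℝ) (hαβ : α < β)
    (hpos : ∀ x ∈ Ioo α β, 0 < b x) (hα : b α = 0) (hβ : b β = 0)
    (huniq : ∀ γ₁ γ₂ : ℝ → ℝ,
      (∀ t, HasDerivAt γ₁ (b (γ₁ t)) t) → (∀ t, HasDerivAt γ₂ (b (γ₂ t)) t) →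
      ∀ t₀, γ₁ t₀ = γ₂ t₀ → γ₁ = γ₂)
    (x₀ : ℝ) (hx₀ : x₀ ∈ Ioo α β)
    (F : ℝ → ℝ) (hF : ∀ x ∈ Ioo α β, F x = ∫ r in x₀..x, 1 / b r) :
    Tendsto F (nhdsWithin α (Ioi α)) atBot ∧
    Tendsto F (nhdsWithin β (Iio β)) atTop := by
  have hF' : ∀ x ∈ Ioo α β, HasDerivAt F (b x)⁻¹ x := by
    intro x hx
    have hint : HasDerivAt (fun u => ∫ r in x₀..u, 1 / b r) (1 / b x) x :=
      hasDerivAt_integral_of_continuousOn isOpen_Ioo ordConnected_Ioo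
        (continuousOn_const.div hb.continuousOn fun y hy => (hpos y hy).ne') hx₀ hx
    rw [← one_div]
    exact hint.congr_of_eventuallyEq (eventually_of_mem (isOpen_Ioo.mem_nhds hx) hF)
  have hFmono : StrictMonoOn F (Ioo α β) :=
    strictMonoOn_Ioo_of_hasDerivAt_pos hF' fun x hx => inv_pos.2 (hpos x hx)
  have havoid : ∀ c, b c = 0 → ∀ t, clampedInv F α β t ≠ c := by
    intro c hc t ht
    have hconst : ∀ s, HasDerivAt (fun _ => c) (b c) s := fun s =>
      hc ▸ hasDerivAt_const (𝕜 := ℝ) s c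
    have hx₀c := congrFun
      (huniq _ _ (hasDerivAt_clampedInv hαβ hb hpos hα hβ hF') hconst t ht) (F x₀)
    rw [clampedInv_apply hFmono hx₀] at hx₀c
    exact (hpos x₀ hx₀).ne' (hx₀c ▸ hc)
  refine ⟨hFmono.monotoneOn.tendsto_nhdsGT_atBot fun ⟨K, hK⟩ => ?_,
    hFmono.monotoneOn.tendsto_nhdsLT_atTop fun ⟨K, hK⟩ => ?_⟩
  · exact havoid α hα (K - 1) (clampedInv_of_forall_lt fun x hx => by linarith [hK ⟨x, hx, rfl⟩])
  · exact havoid β hβ K (clampedInv_of_forall_le hαβ fun x hx => hK ⟨x, hx, rfl⟩)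
end

section
/- Let b : ℝ → ℝ be continuous with b > 0 on (α, β), let F(x) = ∫_{x₀}^x dr/b(r) be a C¹ strictly increasing bijection from (α, β) onto ℝ, and set X(t, x) = F⁻¹(F(x) + t). Then X ∈ C¹(ℝ × (α, β)), ∂_t X(t,x) = b(X(t,x)), and X(0, x) = x. -/
/-!
`F` is a primitive of `1 / b` on `(α, β)`. Its inverse `G` is strictly monotone with open range,
hence continuous, so by the inverse function theorem for derivatives `G` has derivative
`1 / (1 / b (G y)) = b (G y)`, which is continuous; hence `G` is `C¹`.
Then `X(t, x) = G (F x + t)` is a composition of `C¹` maps, `∂ₜ X = G' (F x + t) = b (X t x)`,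
and `X 0 x = G (F x) = x`.
-/

open Set Filter Topology

theorem StrictMonoOn.strictMono_of_rightInverse {α β : Type*} [LinearOrder α] [Preorder β]
    {f : α → β} {g : β → α} {s : Set α} (hf : StrictMonoOn f s) (hgs : ∀ y, g y ∈ s)
    (hfg : ∀ y, f (g y) = y) : StrictMono g := fun y₁ y₂ h =>
  (hf.lt_iff_lt (hgs y₁) (hgs y₂)).1 (by rwa [hfg, hfg])

theorem Monotone.continuous_of_range_mem_nhds {α β : Type*} [LinearOrder α] [TopologicalSpace α]
    [OrderTopology α] [LinearOrder β] [TopologicalSpace β] [OrderTopology β] [DenselyOrdered β]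
    {f : α → β} (hf : Monotone f) (hrange : ∀ a, range f ∈ 𝓝 (f a)) : Continuous f :=
  continuous_iff_continuousAt.2 fun a =>
    continuousAt_of_monotoneOn_of_image_mem_nhds (hf.monotoneOn univ) univ_mem
      (by rw [image_univ]; exact hrange a)

theorem continuous_rightInverse_of_strictMonoOn {f g : ℝ → ℝ} {s : Set ℝ} (hs : IsOpen s)
    (hf : StrictMonoOn f s) (hgs : ∀ y, g y ∈ s) (hsg : s ⊆ range g)
    (hfg : ∀ y, f (g y) = y) : Continuous g :=
  (hf.strictMono_of_rightInverse hgs hfg).monotone.continuous_of_range_mem_nhds fun y =>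
    mem_of_superset (hs.mem_nhds (hgs y)) hsg

theorem hasDerivAt_intervalIntegral_of_continuousOn {E : Type*} [NormedAddCommGroup E]
    [NormedSpace ℝ E] [CompleteSpace E] {f : ℝ → E} {s : Set ℝ} (hs : IsOpen s)
    (hs' : s.OrdConnected) (hf : ContinuousOn f s) {a x : ℝ} (ha : a ∈ s) (hx : x ∈ s) :
    HasDerivAt (fun u => ∫ r in a..u, f r) (f x) x :=
  intervalIntegral.integral_hasDerivAt_right (hf.mono (hs'.uIcc_subset ha hx)).intervalIntegrable
    (hf.stronglyMeasurableAtFilter hs x hx) ((hf x hx).continuousAt (hs.mem_nhds hx))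

theorem contDiff_one_of_hasDerivAt {𝕜 E : Type*} [NontriviallyNormedField 𝕜]
    [NormedAddCommGroup E] [NormedSpace 𝕜 E] {g : 𝕜 → E} {g' : 𝕜 → E}
    (hg : ∀ y, HasDerivAt g (g' y) y) (hg' : Continuous g') : ContDiff 𝕜 1 g :=
  contDiff_one_iff_deriv.2
    ⟨fun y => (hg y).differentiableAt, by rwa [funext fun y => (hg y).deriv]⟩

theorem flow_of_b_general
    (b : ℝ → ℝ) (hb : Continuous b) (α β : ℝ)
    (hpos : ∀ x ∈ Ioo α β, 0 < b x)
    (x₀ : ℝ) (hx₀ : x₀ ∈ Ioo α β)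
    (F : ℝ → ℝ) (hF : ∀ x ∈ Ioo α β, F x = ∫ r in x₀..x, 1 / b r)
    (hFC1 : ContDiffOn ℝ 1 F (Ioo α β)) (hFmono : StrictMonoOn F (Ioo α β))
    (G : ℝ → ℝ) (hGF : ∀ x ∈ Ioo α β, G (F x) = x)
    (hFG : ∀ y : ℝ, G y ∈ Ioo α β ∧ F (G y) = y)
    (X : ℝ → ℝ → ℝ) (hX : ∀ t x, X t x = G (F x + t)) :
    ContDiffOn ℝ 1 (fun p : ℝ × ℝ => X p.1 p.2) (univ ×ˢ Ioo α β) ∧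
    (∀ x ∈ Ioo α β, ∀ t : ℝ, HasDerivAt (fun s => X s x) (b (X t x)) t) ∧
    (∀ x ∈ Ioo α β, X 0 x = x) := by
  have hinv_b : ContinuousOn (fun r => 1 / b r) (Ioo α β) :=
    continuousOn_const.div hb.continuousOn fun r hr => (hpos r hr).ne'
  have hF' : ∀ x ∈ Ioo α β, HasDerivAt F (1 / b x) x := fun x hx =>
    (hasDerivAt_intervalIntegral_of_continuousOn isOpen_Ioo ordConnected_Ioo hinv_b hx₀
      hx).congr_of_eventuallyEq (eventually_of_mem (isOpen_Ioo.mem_nhds hx) hF)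
  have hGcont : Continuous G := continuous_rightInverse_of_strictMonoOn isOpen_Ioo hFmono
    (fun y => (hFG y).1) (fun x hx => ⟨F x, hGF x hx⟩) (fun y => (hFG y).2)
  have hG' : ∀ y, HasDerivAt G (b (G y)) y := fun y => by
    simpa using (hF' _ (hFG y).1).of_local_left_inverse hGcont.continuousAt
      (one_div_ne_zero (hpos _ (hFG y).1).ne') (Eventually.of_forall fun z => (hFG z).2)
  refine ⟨?_, fun x _ t => ?_, fun x hx => by rw [hX, add_zero, hGF x hx]⟩
  · exact ((contDiff_one_of_hasDerivAt hG' (hb.comp hGcont)).comp_contDiffOn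
      ((hFC1.comp contDiffOn_snd fun p hp => hp.2).add contDiffOn_fst)).congr fun p _ => hX p.1 p.2
  · simpa only [hX] using (hG' (F x + t)).comp_const_add (F x) t

theorem flow_of_b
    (b : ℝ → ℝ) (hb : Continuous b) (α β : ℝ) (hαβ : α < β)
    (hpos : ∀ x ∈ Ioo α β, 0 < b x)
    (x₀ : ℝ) (hx₀ : x₀ ∈ Ioo α β)
    (F : ℝ → ℝ) (hF : ∀ x ∈ Ioo α β, F x = ∫ r in x₀..x, 1 / b r)
    (hFC1 : ContDiffOn ℝ 1 F (Ioo α β)) (hFmono : StrictMonoOn F (Ioo α β))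
    (G : ℝ → ℝ) (hGF : ∀ x ∈ Ioo α β, G (F x) = x)
    (hFG : ∀ y : ℝ, G y ∈ Ioo α β ∧ F (G y) = y)
    (X : ℝ → ℝ → ℝ) (hX : ∀ t x, X t x = G (F x + t)) :
    ContDiffOn ℝ 1 (fun p : ℝ × ℝ => X p.1 p.2) (univ ×ˢ Ioo α β) ∧
    (∀ x ∈ Ioo α β, ∀ t : ℝ, HasDerivAt (fun s => X s x) (b (X t x)) t) ∧
    (∀ x ∈ Ioo α β, X 0 x = x) :=
  flow_of_b_general b hb α β hpos x₀ hx₀ F hF hFC1 hFmono G hGF hFG X hX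
end

section
/- Let b : [0,T] × ℝ^d → ℝ^d be bounded Borel and let η be a finite signed Borel measure on C([0,T]; ℝ^d) concentrated on the set Γ_b of solutions of γ'(t) = b(t, γ(t)). Define μ_t := (e_t)_♯ η where e_t(γ) = γ(t). Then (μ_t) solves ∂_t μ_t + div(b μ_t) = 0 in the sense of distributions with initial datum μ₀ = (e₀)_♯ η. -/
/-!
Along an integral curve `γ t = γ 0 + ∫₀ᵗ b(s, γ s) ds` the primitive is Lipschitz, so
`t ↦ φ(t, γ t)` is Lipschitz, hence absolutely continuous; by Lebesgue differentiation its
derivative is a.e. `∂ₜφ + ∇ₓφ · b` evaluated along `γ`. The fundamental theorem of calculus for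
absolutely continuous functions gives `∫₀ᵀ (∂ₜφ + ∇ₓφ · b)(t, γ t) dt = φ(T, γ T) - φ(0, γ 0)`,
and `φ(T, ·) = 0`. Integrating against `η` and exchanging the integrals by Fubini yields the weak
formulation, the integrand being bounded since `b` is bounded and `φ` is Lipschitz.
-/

open MeasureTheory Set Function

open scoped NNReal

section Partials

variable {E : Type*} [NormedAddCommGroup E] [NormedSpace ℝ E]

theorem deriv_add_fderiv_apply_eq_fderiv_uncurry {φ : ℝ → E → ℝ} {t : ℝ} {x : E}
    (hφ : DifferentiableAt ℝ (uncurry φ) (t, x)) (w : E) :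
    deriv (fun s => φ s x) t + fderiv ℝ (fun y => φ t y) x w
      = fderiv ℝ (uncurry φ) (t, x) (1, w) := by
  have ht : HasDerivAt (fun s => φ s x) (fderiv ℝ (uncurry φ) (t, x) (1, 0)) t :=
    hφ.hasFDerivAt.comp_hasDerivAt (f := fun s => (s, x)) t
      ((hasDerivAt_id t).prodMk (hasDerivAt_const t x))
  have hx : HasFDerivAt (fun y => φ t y)
      ((fderiv ℝ (uncurry φ) (t, x)).comp (ContinuousLinearMap.inr ℝ ℝ E)) x :=
    hφ.hasFDerivAt.comp x (hasFDerivAt_prodMk_right t x)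
  rw [ht.deriv, hx.fderiv, ContinuousLinearMap.comp_apply, ContinuousLinearMap.inr_apply,
    ← map_add, Prod.mk_add_mk, add_zero, zero_add]

end Partials

section IntegralCurve

variable {E : Type*} [NormedAddCommGroup E] [NormedSpace ℝ E]

theorem lipschitzWith_intervalIntegral_of_norm_le {v : ℝ → E} {M : ℝ}
    (hv : LocallyIntegrable v volume) (hM : ∀ s, ‖v s‖ ≤ M) (a : ℝ) :
    LipschitzWith M.toNNReal (fun t => ∫ s in a..t, v s) := by
  refine LipschitzWith.of_dist_le_mul fun t u => ?_
  have hvi : ∀ c d, IntervalIntegrable v volume c d := fun c d =>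
    (hv.integrableOn_isCompact isCompact_uIcc).intervalIntegrable
  rw [dist_eq_norm, intervalIntegral.integral_interval_sub_left (hvi _ _) (hvi _ _),
    Real.dist_eq, Real.coe_toNNReal']
  exact intervalIntegral.norm_integral_le_of_norm_le_const fun s _ =>
    (hM s).trans (le_max_left _ _)

theorem integral_fderiv_apply_eq_sub_of_integral_curve [CompleteSpace E] {Φ : ℝ × E → ℝ}
    {K : ℝ≥0} (hΦ : Differentiable ℝ Φ) (hΦK : LipschitzWith K Φ) {v : ℝ → E} {M : ℝ}
    (hv : AEStronglyMeasurable v volume) (hM : ∀ s, ‖v s‖ ≤ M) {γ : ℝ → E} {a b : ℝ}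
    (hab : a ≤ b) (hγ : ∀ t ∈ Icc a b, γ t = γ a + ∫ s in a..t, v s) :
    ∫ t in a..b, fderiv ℝ Φ (t, γ t) (1, v t) = Φ (b, γ b) - Φ (a, γ a) := by
  have hloc : LocallyIntegrable v volume :=
    (locallyIntegrable_const M).mono hv (ae_of_all _ fun s => (hM s).trans (le_abs_self M))
  set X : ℝ → E := fun t => γ a + ∫ s in a..t, v s
  have hXγ : EqOn X γ (uIcc a b) := fun t ht => (hγ t (uIcc_of_le hab ▸ ht)).symm
  have hf : LipschitzWith _ fun t => Φ (t, X t) :=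
    hΦK.comp (LipschitzWith.id.prodMk
      ((LipschitzWith.const (γ a)).add (lipschitzWith_intervalIntegral_of_norm_le hloc hM a)))
  have hderiv : ∀ᵐ t, deriv (fun t => Φ (t, X t)) t = fderiv ℝ Φ (t, X t) (1, v t) := by
    filter_upwards [LocallyIntegrable.ae_hasDerivAt_integral hloc] with t ht
    exact ((hΦ _).hasFDerivAt.comp_hasDerivAt t
      ((hasDerivAt_id t).prodMk ((ht a).const_add (γ a)))).deriv
  calc ∫ t in a..b, fderiv ℝ Φ (t, γ t) (1, v t)
      = ∫ t in a..b, fderiv ℝ Φ (t, X t) (1, v t) :=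
        intervalIntegral.integral_congr fun t ht => by simp only [hXγ ht]
    _ = ∫ t in a..b, deriv (fun t => Φ (t, X t)) t :=
        intervalIntegral.integral_congr_ae (hderiv.mono fun t ht _ => ht.symm)
    _ = Φ (b, X b) - Φ (a, X a) :=
        hf.lipschitzOnWith.absolutelyContinuousOnInterval.integral_deriv_eq_sub
    _ = Φ (b, γ b) - Φ (a, γ a) := by
        rw [hXγ right_mem_uIcc, hXγ left_mem_uIcc]

end IntegralCurve

section Evaluation

variable {E : Type*} [TopologicalSpace E] [TopologicalSpace.PseudoMetrizableSpace E]
  [MeasurableSpace E] [BorelSpace E] [Zero E]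

theorem aemeasurable_eval_prod_of_ae_continuous (μ : Measure ℝ) [SFinite μ]
    {η : Measure (ℝ → E)} [SFinite η] (hη : ∀ᵐ γ ∂η, Continuous γ) :
    AEMeasurable (fun p : ℝ × (ℝ → E) => p.2 p.1) (μ.prod η) := by
  -- The evaluation is not measurable for the product σ-algebra; after killing it on a measurable
  -- null set containing the discontinuous curves, it is continuous in `t` and measurable in `γ`.
  obtain ⟨N, hNc, hN, hN0⟩ := exists_measurable_superset_of_null (ae_iff.1 hη)
  set u : ℝ → (ℝ → E) → E := fun t => Nᶜ.indicator fun γ => γ t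
  have hu_cont : ∀ γ, Continuous fun t => u t γ := by
    intro γ
    by_cases hγ : γ ∈ N
    · simpa [u, hγ] using continuous_const
    · simpa [u, hγ] using not_not.1 (fun h => hγ (hNc h))
  refine ⟨uncurry u, measurable_uncurry_of_continuous_of_measurable hu_cont
    fun t => (measurable_pi_apply t).indicator hN.compl, ?_⟩
  have hnull : (μ.prod η) (univ ×ˢ N) = 0 := by rw [Measure.prod_prod, hN0, mul_zero]
  refine measure_mono_null (fun p hp => ?_) hnull
  refine ⟨mem_univ _, by_contra fun hpN => hp ?_⟩
  exact (indicator_of_mem (mem_compl hpN) fun γ => γ p.1).symm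

end Evaluation

section Fubini

variable {E F : Type*} [NormedAddCommGroup E] [MeasurableSpace E] [BorelSpace E]
  [NormedAddCommGroup F]

instance isFiniteMeasure_restrict_uIoc (a b : ℝ) :
    IsFiniteMeasure (volume.restrict (uIoc a b)) :=
  isFiniteMeasure_restrict.2 measure_Ioc_lt_top.ne

theorem integrable_comp_eval_prod {G : ℝ × E → F} (hG : StronglyMeasurable G) {C : ℝ}
    (hC : ∀ p, ‖G p‖ ≤ C) (μ : Measure ℝ) [IsFiniteMeasure μ] {η : Measure (ℝ → E)}
    [IsFiniteMeasure η] (hη : ∀ᵐ γ ∂η, Continuous γ) :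
    Integrable (fun p : ℝ × (ℝ → E) => G (p.1, p.2 p.1)) (μ.prod η) :=
  (integrable_const C).mono'
    (hG.aestronglyMeasurable.comp_aemeasurable (measurable_fst.aemeasurable.prodMk
      (aemeasurable_eval_prod_of_ae_continuous μ hη)))
    (ae_of_all _ fun _ => hC _)

variable [NormedSpace ℝ F]

theorem intervalIntegrable_integral_comp_eval {G : ℝ × E → F} (hG : StronglyMeasurable G)
    {C : ℝ} (hC : ∀ p, ‖G p‖ ≤ C) {η : Measure (ℝ → E)} [IsFiniteMeasure η]
    (hη : ∀ᵐ γ ∂η, Continuous γ) (a b : ℝ) :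
    IntervalIntegrable (fun t => ∫ γ, G (t, γ t) ∂η) volume a b :=
  intervalIntegrable_iff.2 (integrable_comp_eval_prod hG hC _ hη).integral_prod_left

theorem intervalIntegral_integral_comp_eval_swap [CompleteSpace F] {G : ℝ × E → F}
    (hG : StronglyMeasurable G) {C : ℝ} (hC : ∀ p, ‖G p‖ ≤ C) {η : Measure (ℝ → E)}
    [IsFiniteMeasure η] (hη : ∀ᵐ γ ∂η, Continuous γ) (a b : ℝ) :
    ∫ t in a..b, ∫ γ, G (t, γ t) ∂η = ∫ γ, (∫ t in a..b, G (t, γ t)) ∂η :=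
  intervalIntegral_integral_swap (integrable_comp_eval_prod hG hC _ hη)

end Fubini

section Superposition

variable {E : Type*} [NormedAddCommGroup E] [NormedSpace ℝ E]

theorem norm_fderiv_apply_one_le {Φ : ℝ × E → ℝ} {K : ℝ≥0} (hΦ : LipschitzWith K Φ)
    (p : ℝ × E) {w : E} {M : ℝ} (hw : ‖w‖ ≤ M) :
    ‖fderiv ℝ Φ p (1, w)‖ ≤ K * max 1 M :=
  calc ‖fderiv ℝ Φ p (1, w)‖ ≤ ‖fderiv ℝ Φ p‖ * ‖((1 : ℝ), w)‖ := (fderiv ℝ Φ p).le_opNorm _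
    _ ≤ K * max 1 M := by
      refine mul_le_mul (norm_fderiv_le_of_lipschitz ℝ hΦ) ?_ (norm_nonneg _) K.coe_nonneg
      rw [Prod.norm_def, norm_one]
      exact max_le_max le_rfl hw

variable [MeasurableSpace E] [BorelSpace E] [SecondCountableTopology E]

theorem measurable_fderiv_apply_one {Φ : ℝ × E → ℝ} (hΦ : ContDiff ℝ 1 Φ) {b : ℝ → E → E}
    (hb : Measurable (uncurry b)) :
    Measurable fun p : ℝ × E => fderiv ℝ Φ p (1, b p.1 p.2) :=
  (hΦ.continuous_fderiv_apply one_ne_zero).measurable.comp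
    (measurable_id.prodMk (measurable_const.prodMk hb))

theorem intervalIntegral_integral_fderiv_apply_of_ae_integral_curve [CompleteSpace E]
    {Φ : ℝ × E → ℝ} {K : ℝ≥0} (hΦ : ContDiff ℝ 1 Φ) (hΦK : LipschitzWith K Φ)
    {b : ℝ → E → E} (hb : Measurable (uncurry b)) {M : ℝ} (hbM : ∀ t x, ‖b t x‖ ≤ M)
    {T : ℝ} (hT : 0 ≤ T) {η : Measure (ℝ → E)} [IsFiniteMeasure η]
    (hη : ∀ᵐ γ ∂η, Continuous γ ∧ ∀ t ∈ Icc 0 T, γ t = γ 0 + ∫ s in 0..t, b s (γ s)) :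
    ∫ t in 0..T, ∫ γ, fderiv ℝ Φ (t, γ t) (1, b t (γ t)) ∂η
      = ∫ γ, (Φ (T, γ T) - Φ (0, γ 0)) ∂η := by
  rw [intervalIntegral_integral_comp_eval_swap
    (measurable_fderiv_apply_one hΦ hb).stronglyMeasurable
    (fun p => norm_fderiv_apply_one_le hΦK p (hbM _ _)) (hη.mono fun _ h => h.1)]
  refine integral_congr_ae (hη.mono fun γ ⟨hγc, hγ⟩ => ?_)
  have hv : Measurable fun s => b s (γ s) := hb.comp (measurable_id.prodMk hγc.measurable)
  exact integral_fderiv_apply_eq_sub_of_integral_curve (hΦ.differentiable one_ne_zero) hΦK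
    hv.aestronglyMeasurable (fun s => hbM s (γ s)) hT hγ

end Superposition

theorem superposition_solves_continuity_equation
    (d : ℕ) (T : ℝ) (hT : 0 < T)
    (b : ℝ → EuclideanSpace ℝ (Fin d) → EuclideanSpace ℝ (Fin d))
    (hbmeas : Measurable (uncurry b)) (M : ℝ) (hbdd : ∀ t x, ‖b t x‖ ≤ M)
    -- η = ηp - ηn is a finite signed Borel measure on curves,
    -- concentrated on the set Γ_b of integral curves of b:
    (ηp ηn : Measure (ℝ → EuclideanSpace ℝ (Fin d)))
    (hfinp : IsFiniteMeasure ηp) (hfinn : IsFiniteMeasure ηn)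
    (hconc_p : ηp {γ | ¬ (Continuous γ ∧ ∀ t ∈ Icc (0:ℝ) T,
        γ t = γ 0 + ∫ s in (0:ℝ)..t, b s (γ s))} = 0)
    (hconc_n : ηn {γ | ¬ (Continuous γ ∧ ∀ t ∈ Icc (0:ℝ) T,
        γ t = γ 0 + ∫ s in (0:ℝ)..t, b s (γ s))} = 0) :
    -- μ_t := (e_t)_♯ η solves the continuity equation with datum μ₀ = (e₀)_♯ η:
    ∀ φ : ℝ → EuclideanSpace ℝ (Fin d) → ℝ,
      ContDiff ℝ 1 (uncurry φ) → HasCompactSupport (uncurry φ) →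
      tsupport (uncurry φ) ⊆ Iio T ×ˢ univ →
      ∫ t in (0:ℝ)..T,
        ((∫ γ, (deriv (fun s => φ s (γ t)) t
            + fderiv ℝ (fun x => φ t x) (γ t) (b t (γ t))) ∂ηp) -
         (∫ γ, (deriv (fun s => φ s (γ t)) t
            + fderiv ℝ (fun x => φ t x) (γ t) (b t (γ t))) ∂ηn))
      = -(((∫ γ, φ 0 (γ 0) ∂ηp)) - (∫ γ, φ 0 (γ 0) ∂ηn)) := by
  intro φ hφ hφc hφT
  obtain ⟨K, hK⟩ := hφ.lipschitzWith_of_hasCompactSupport hφc one_ne_zero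
  have hφT_zero : ∀ x, φ T x = 0 := fun x =>
    image_eq_zero_of_notMem_tsupport (f := uncurry φ) (x := (T, x)) fun h =>
      lt_irrefl T (hφT h).1
  have hpartials : ∀ t x w, deriv (fun s => φ s x) t + fderiv ℝ (fun y => φ t y) x w
      = fderiv ℝ (uncurry φ) (t, x) (1, w) := fun t x =>
    deriv_add_fderiv_apply_eq_fderiv_uncurry (hφ.differentiable one_ne_zero _)
  have hint : ∀ (η : Measure _) [IsFiniteMeasure η], (∀ᵐ γ ∂η, Continuous γ) →
      IntervalIntegrable (fun t => ∫ γ, fderiv ℝ (uncurry φ) (t, γ t) (1, b t (γ t)) ∂η)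
        volume 0 T := fun η _ hη =>
    intervalIntegrable_integral_comp_eval (measurable_fderiv_apply_one hφ hbmeas).stronglyMeasurable
      (fun p => norm_fderiv_apply_one_le hK p (hbdd _ _)) hη 0 T
  simp only [hpartials]
  rw [intervalIntegral.integral_sub (hint ηp ((ae_iff.2 hconc_p).mono fun _ h => h.1))
      (hint ηn ((ae_iff.2 hconc_n).mono fun _ h => h.1)),
    intervalIntegral_integral_fderiv_apply_of_ae_integral_curve hφ hK hbmeas hbdd hT.le
      (ae_iff.2 hconc_p),
    intervalIntegral_integral_fderiv_apply_of_ae_integral_curve hφ hK hbmeas hbdd hT.le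
      (ae_iff.2 hconc_n)]
  simp only [uncurry_apply_pair, hφT_zero, zero_sub, integral_neg, neg_sub_neg, neg_sub]
end

section
/- Let P ⊆ ℝ be Borel with the property that every nonempty open interval meets both P and its complement in positive Lebesgue measure, and set b(x) = 𝟙_P(x) − 𝟙_{ℝ\P}(x) (so b takes values ±1 and |b| = 1 a.e.). Then the ODE γ'(t) = b(γ(t)) (for a.e. t, γ absolutely continuous) admits no solution on any nondegenerate time interval. -/
/-!
Let `F x = ∫₀ˣ b`. Because `P` and `Pᶜ` both have positive measure in every interval,
`|F y - F x| < |y - x|` whenever `x ≠ y`. A solution `γ` on `[a, c]` is 1-Lipschitz with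
`γ' = b ∘ γ = ±1` a.e., so by the chain rule `(F ∘ γ)' = (b ∘ γ)² = 1` a.e. and
`F (γ c) - F (γ a) = c - a ≥ |γ c - γ a|`, which contradicts the strict contraction.

The chain rule holds a.e. because a function cannot spend positive time in a null set at points
where its derivative is nonzero (Luzin's N⁻¹ property): near such points it expands distances,
so it has a Lipschitz inverse on suitable pieces.
-/

open MeasureTheory Set
open scoped Classical

open Metric
open scoped NNReal ENNReal

theorem volume_eq_zero_of_dist_le_mul_dist {g : ℝ → ℝ} {S : Set ℝ} {K : ℝ≥0}
    (hg : ∀ s ∈ S, ∀ s' ∈ S, dist s s' ≤ K * dist (g s) (g s')) (hS : volume (g '' S) = 0) :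
    volume S = 0 := by
  have hanti : AntilipschitzWith K (S.domRestrict g) :=
    AntilipschitzWith.of_le_mul_dist fun x y => hg x x.2 y y.2
  refine le_antisymm ?_ zero_le
  calc volume S = μH[1] (((↑) : S → ℝ) '' univ) := by
        rw [hausdorffMeasure_real, image_univ, Subtype.range_coe]
    _ = μH[1] (univ : Set S) := isometry_subtype_coe.hausdorffMeasure_image (.inl zero_le_one) _
    _ ≤ (K : ℝ≥0∞) ^ (1 : ℝ) * μH[1] (S.domRestrict g '' univ) :=
        hanti.le_hausdorffMeasure_image zero_le_one _
    _ = 0 := by rw [image_univ, range_domRestrict, hausdorffMeasure_real, hS, mul_zero]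

theorem volume_preimage_inter_deriv_ne_zero_eq_zero {g : ℝ → ℝ} {N : Set ℝ} (hN : volume N = 0) :
    volume (g ⁻¹' N ∩ {t | deriv g t ≠ 0}) = 0 := by
  set E : ℕ → Set ℝ := fun n => {t ∈ g ⁻¹' N |
    ∀ t', dist t' t < ((n : ℝ) + 1)⁻¹ → dist t' t ≤ ((n : ℝ) + 1) * dist (g t') (g t)}
  have hcover : g ⁻¹' N ∩ {t | deriv g t ≠ 0} ⊆ ⋃ n, E n := by
    rintro t ⟨htN, ht⟩
    obtain ⟨C, hC⟩ :=
      ((differentiableAt_of_deriv_ne_zero ht).hasDerivAt.isTheta_sub ht).isBigO_symm.bound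
    rw [Filter.prod_pure, Filter.eventually_map, Metric.eventually_nhds_iff] at hC
    obtain ⟨δ, hδ, hδC⟩ := hC
    obtain ⟨n, hn⟩ := exists_nat_gt (max C δ⁻¹)
    refine mem_iUnion.2 ⟨n, htN, fun t' ht' => ?_⟩
    have hδn : ((n : ℝ) + 1)⁻¹ < δ := inv_lt_of_inv_lt₀ hδ (by linarith [le_max_right C δ⁻¹])
    calc dist t' t = ‖t' - t‖ := dist_eq_norm _ _
      _ ≤ C * ‖g t' - g t‖ := hδC (ht'.trans hδn)
      _ ≤ ((n : ℝ) + 1) * dist (g t') (g t) := by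
        rw [← dist_eq_norm]; gcongr; linarith [le_max_left C δ⁻¹]
  refine measure_mono_null hcover (measure_iUnion_null fun n =>
    measure_null_of_locally_null _ fun t _ => ?_)
  refine ⟨E n ∩ ball t (((n : ℝ) + 1)⁻¹ / 2),
    inter_mem_nhdsWithin _ (ball_mem_nhds _ (by positivity)), ?_⟩
  refine volume_eq_zero_of_dist_le_mul_dist (K := n + 1) (fun s hs s' hs' => ?_)
    (measure_mono_null (by rintro _ ⟨s, hs, rfl⟩; exact hs.1.1) hN)
  have hss' : dist s s' < ((n : ℝ) + 1)⁻¹ := by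
    linarith [dist_triangle_right s s' t, mem_ball.1 hs.2, mem_ball.1 hs'.2]
  simpa using hs'.1.2 s hss'

section

variable {E : Type*} [NormedAddCommGroup E] [NormedSpace ℝ E]

theorem MeasureTheory.LocallyIntegrable.ae_hasDerivAt_integral_comp [CompleteSpace E]
    {f : ℝ → E} (hf : LocallyIntegrable f volume) (g : ℝ → ℝ) (c : ℝ) :
    ∀ᵐ t, deriv g t ≠ 0 →
      HasDerivAt (fun t => ∫ x in c..g t, f x) (deriv g t • f (g t)) t := by
  set N := {x | ¬ HasDerivAt (fun y => ∫ x in c..y, f x) (f x) x}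
  have hN : volume N = 0 :=
    ae_iff.1 ((LocallyIntegrable.ae_hasDerivAt_integral hf).mono fun x hx => hx c)
  filter_upwards [measure_eq_zero_iff_ae_notMem.1
    (volume_preimage_inter_deriv_ne_zero_eq_zero (g := g) hN)] with t ht hderiv
  have hFt : HasDerivAt (fun y => ∫ x in c..y, f x) (f (g t)) (g t) :=
    not_not.1 fun h => ht ⟨h, hderiv⟩
  exact hFt.scomp t (differentiableAt_of_deriv_ne_zero hderiv).hasDerivAt

theorem lipschitzOnWith_intervalIntegral {f : ℝ → E} {C : ℝ≥0} {s : Set ℝ} {c : ℝ}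
    (hf : ∀ x ∈ s, IntervalIntegrable f volume c x) (hC : ∀ x, ‖f x‖ ≤ C) :
    LipschitzOnWith C (fun x => ∫ t in c..x, f t) s :=
  LipschitzOnWith.of_dist_le_mul fun x hx y hy => by
    rw [dist_eq_norm, intervalIntegral.integral_interval_sub_left (hf x hx) (hf y hy),
      Real.dist_eq]
    exact intervalIntegral.norm_integral_le_of_norm_le_const fun t _ => hC t

variable {f γ : ℝ → E} {a c : ℝ}

theorem ae_hasDerivAt_of_eq_add_integral [CompleteSpace E] (hf : IntervalIntegrable f volume a c)
    (hγ : ∀ t ∈ Icc a c, γ t = γ a + ∫ s in a..t, f s) :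
    ∀ᵐ t, t ∈ Ioo a c → HasDerivAt γ (f t) t := by
  filter_upwards [hf.ae_hasDerivAt_integral] with t ht htI
  refine ((ht (Icc_subset_uIcc (Ioo_subset_Icc_self htI)) a left_mem_uIcc).const_add
    (γ a)).congr_of_eventuallyEq ?_
  filter_upwards [Ioo_mem_nhds htI.1 htI.2] with s hs using hγ s (Ioo_subset_Icc_self hs)

theorem lipschitzOnWith_of_eq_add_integral {C : ℝ≥0} (hf : IntervalIntegrable f volume a c)
    (hγ : ∀ t ∈ Icc a c, γ t = γ a + ∫ s in a..t, f s) (hC : ∀ x, ‖f x‖ ≤ C) :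
    LipschitzOnWith C γ (Icc a c) := by
  have hI := lipschitzOnWith_intervalIntegral (s := Icc a c) (c := a)
    (fun x hx => hf.mono_set (uIcc_subset_uIcc_left (Icc_subset_uIcc hx))) hC
  refine LipschitzOnWith.of_dist_le_mul fun s hs t ht => ?_
  rw [hγ s hs, hγ t ht, dist_add_left]
  exact hI.dist_le_mul s hs t ht

end

theorem intervalIntegral.integral_comp_mul_deriv_of_lipschitzOnWith
    {f : ℝ → ℝ} {γ : ℝ → ℝ} {a c : ℝ} {C K : ℝ≥0} (hf : LocallyIntegrable f volume)
    (hC : ∀ x, ‖f x‖ ≤ C) (hγ : LipschitzOnWith K γ (uIcc a c))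
    (hγ' : ∀ᵐ t, t ∈ uIoc a c → deriv γ t ≠ 0) :
    ∫ t in a..c, f (γ t) * deriv γ t = ∫ x in γ a..γ c, f x := by
  set F : ℝ → ℝ := fun y => ∫ x in γ a..y, f x
  have hF : LipschitzWith C F := lipschitzOnWith_univ.1 <|
    lipschitzOnWith_intervalIntegral (fun x _ => intervalIntegrable_iff.2 <|
      (hf.integrableOn_isCompact isCompact_uIcc).mono_set uIoc_subset_uIcc) hC
  calc ∫ t in a..c, f (γ t) * deriv γ t = ∫ t in a..c, deriv (F ∘ γ) t := by
        refine integral_congr_ae ?_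
        filter_upwards [hf.ae_hasDerivAt_integral_comp γ (γ a), hγ'] with t hFt hγt ht
        rw [mul_comm, ← smul_eq_mul]
        exact (hFt (hγt ht)).deriv.symm
    _ = F (γ c) - F (γ a) :=
        (hF.comp_lipschitzOnWith hγ).absolutelyContinuousOnInterval.integral_deriv_eq_sub
    _ = ∫ x in γ a..γ c, f x := by simp [F]

theorem abs_integral_ite_mem_lt {α : Type*} [MeasurableSpace α] {μ : Measure α}
    [IsFiniteMeasure μ] {P : Set α} (hP : MeasurableSet P) (h₁ : μ P ≠ 0) (h₂ : μ Pᶜ ≠ 0) :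
    |∫ x, (if x ∈ P then (1 : ℝ) else -1) ∂μ| < μ.real univ := by
  have hsplit := integral_piecewise (f := fun _ => (1 : ℝ)) (g := fun _ => -1) (μ := μ) hP
    (integrableOn_const (measure_ne_top _ _)) (integrableOn_const (measure_ne_top _ _))
  simp only [Set.piecewise, setIntegral_const, smul_eq_mul, mul_one, mul_neg] at hsplit
  have hP₁ : 0 < μ.real P := ENNReal.toReal_pos h₁ (measure_ne_top _ _)
  have hP₂ : 0 < μ.real Pᶜ := ENNReal.toReal_pos h₂ (measure_ne_top _ _)
  rw [hsplit, ← measureReal_add_measureReal_compl hP, abs_lt]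
  constructor <;> linarith

theorem abs_intervalIntegral_ite_mem_lt {P : Set ℝ} (hP : MeasurableSet P) {x y : ℝ}
    (hxy : x < y) (h₁ : 0 < volume (Ioo x y ∩ P)) (h₂ : 0 < volume (Ioo x y ∩ Pᶜ)) :
    |∫ t in x..y, if t ∈ P then (1 : ℝ) else -1| < y - x := by
  have : IsFiniteMeasure (volume.restrict (Ioo x y)) :=
    isFiniteMeasure_restrict.2 measure_Ioo_lt_top.ne
  rw [intervalIntegral.integral_of_le hxy.le, integral_Ioc_eq_integral_Ioo]
  convert abs_integral_ite_mem_lt hP (μ := volume.restrict (Ioo x y)) ?_ ?_ using 1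
  · rw [measureReal_restrict_apply_univ, Real.volume_real_Ioo_of_le hxy.le]
  · rw [Measure.restrict_apply hP, inter_comm]; exact h₁.ne'
  · rw [Measure.restrict_apply hP.compl, inter_comm]; exact h₂.ne'

theorem abs_intervalIntegral_ite_mem_lt_abs {P : Set ℝ} (hP : MeasurableSet P)
    (hpos : ∀ a c : ℝ, a < c → 0 < volume (Ioo a c ∩ P) ∧ 0 < volume (Ioo a c ∩ Pᶜ))
    {x y : ℝ} (hxy : x ≠ y) :
    |∫ t in x..y, if t ∈ P then (1 : ℝ) else -1| < |y - x| := by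
  rcases hxy.lt_or_gt with hlt | hgt
  · rw [abs_of_pos (sub_pos.2 hlt)]
    exact abs_intervalIntegral_ite_mem_lt hP hlt (hpos x y hlt).1 (hpos x y hlt).2
  · rw [intervalIntegral.integral_symm, abs_neg, abs_sub_comm, abs_of_pos (sub_pos.2 hgt)]
    exact abs_intervalIntegral_ite_mem_lt hP hgt (hpos y x hgt).1 (hpos y x hgt).2

theorem no_integral_curve_of_intervalIntegrable (P : Set ℝ) (hP : MeasurableSet P)
    (hpos : ∀ a c : ℝ, a < c →
      0 < volume (Ioo a c ∩ P) ∧ 0 < volume (Ioo a c ∩ Pᶜ))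
    (b : ℝ → ℝ) (hb : ∀ x, b x = if x ∈ P then 1 else -1) {γ : ℝ → ℝ} {a c : ℝ}
    (hac : a < c) (hint : IntervalIntegrable (fun t => b (γ t)) volume a c)
    (hγ : ∀ t ∈ Icc a c, γ t = γ a + ∫ s in a..t, b (γ s)) : False := by
  have hb_abs : ∀ x, |b x| = 1 := fun x => by rw [hb]; split_ifs <;> norm_num
  have hb_meas : Measurable b := by
    rw [funext hb]
    exact measurable_const.ite hP measurable_const
  have hb_loc : LocallyIntegrable b volume :=
    (locallyIntegrable_const (1 : ℝ)).mono hb_meas.aestronglyMeasurable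
      (ae_of_all _ fun x => by simp [hb_abs])
  have hγ_lip : LipschitzOnWith 1 γ (uIcc a c) := by
    rw [uIcc_of_le hac.le]
    exact lipschitzOnWith_of_eq_add_integral hint hγ fun t => by simp [hb_abs]
  have hγ' : ∀ᵐ t, t ∈ uIoc a c → deriv γ t = b (γ t) := by
    filter_upwards [ae_hasDerivAt_of_eq_add_integral hint hγ,
      measure_eq_zero_iff_ae_notMem.1 (measure_singleton c)] with t hγt htc ht
    rw [uIoc_of_le hac.le] at ht
    exact (hγt ⟨ht.1, lt_of_le_of_ne ht.2 htc⟩).deriv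
  have hcov : ∫ x in γ a..γ c, b x = c - a := by
    rw [← intervalIntegral.integral_comp_mul_deriv_of_lipschitzOnWith hb_loc (C := 1)
      (fun x => by simp [hb_abs]) hγ_lip
      (hγ'.mono fun t h ht => by simp [h ht, ← abs_ne_zero, hb_abs])]
    calc ∫ t in a..c, b (γ t) * deriv γ t = ∫ t in a..c, (1 : ℝ) :=
          intervalIntegral.integral_congr_ae <| hγ'.mono fun t h ht => by
            rw [h ht, ← abs_mul_abs_self, hb_abs, one_mul]
      _ = c - a := by simp
  have hγ_ac : |γ c - γ a| ≤ c - a := by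
    simpa [Real.dist_eq, abs_of_pos (sub_pos.2 hac)] using
      hγ_lip.dist_le_mul c right_mem_uIcc a left_mem_uIcc
  rcases eq_or_ne (γ a) (γ c) with heq | hne
  · rw [heq, intervalIntegral.integral_same] at hcov
    linarith
  · have hcontract := abs_intervalIntegral_ite_mem_lt_abs hP hpos hne
    simp only [← hb, hcov, abs_of_pos (sub_pos.2 hac)] at hcontract
    linarith

theorem no_integral_curves
    (P : Set ℝ) (hP : MeasurableSet P)
    (hpos : ∀ a c : ℝ, a < c →
      0 < volume (Ioo a c ∩ P) ∧ 0 < volume (Ioo a c ∩ Pᶜ))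
    (b : ℝ → ℝ) (hb : ∀ x, b x = if x ∈ P then 1 else -1) :
    ¬ ∃ (a c : ℝ) (γ : ℝ → ℝ), a < c ∧
      ∀ t ∈ Icc a c, γ t = γ a + ∫ s in a..t, b (γ s) := by
  rintro ⟨a, c, γ, hac, hγ⟩
  -- Where `b ∘ γ` is not integrable the integral is the junk value `0`, so `γ` is constant there.
  obtain ⟨c', hc', hint⟩ :
      ∃ c' ∈ Ioc a c, IntervalIntegrable (fun t => b (γ t)) volume a c' := by
    by_cases hconst : ∀ t ∈ Icc a c, γ t = γ a
    · refine ⟨c, ⟨hac, le_rfl⟩, (intervalIntegrable_const (c := b (γ a))).congr fun t ht => ?_⟩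
      rw [uIoc_of_le hac.le] at ht
      exact congrArg b (hconst t (Ioc_subset_Icc_self ht)).symm
    · obtain ⟨t, ht, hne⟩ := not_forall₂.1 hconst
      refine ⟨t, ⟨lt_of_le_of_ne ht.1 fun hat => hne (hat ▸ rfl), ht.2⟩,
        intervalIntegral.intervalIntegrable_of_integral_ne_zero fun h0 => hne ?_⟩
      rw [hγ t ht, h0, add_zero]
  exact no_integral_curve_of_intervalIntegrable P hP hpos b hb hc'.1 hint
    fun t ht => hγ t ⟨ht.1, ht.2.trans hc'.2⟩
end

section
/- Let T = {(x,y,t) : x, y, t > 0, x + y + t = 1} ⊂ ℝ³ and let V be a bounded Borel vector field tangent to the plane x + y + t = 1 with div(𝟙_T V ℋ²) supported on ∂T. Extend V to all eight reflected copies T_{s₁,s₂,s₃} = {(s₁x, s₂y, s₃t) : (x,y,t) ∈ T}, s_i ∈ {±1}, by U(x,y,t) = Σ 𝟙_T(s₁x, s₂y, s₃t)(s₂s₃V₁, s₁s₃V₂, s₁s₂V₃)(s₁x, s₂y, s₃t). If the boundary flux g_i of 𝟙_T V on the face where the i-th coordinate vanishes is even in the i-th variable, then div(U ℋ²) = 0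 in the sense of distributions on ℝ³. -/
open MeasureTheory Set Function
open scoped Classical NNReal ENNReal

noncomputable section

namespace RFDF

abbrev E3 := EuclideanSpace ℝ (Fin 3)

def sg (b : Bool) : ℝ := if b then 1 else -1

lemma sg_sq (b : Bool) : sg b * sg b = 1 := by cases b <;> simp [sg]

lemma norm_sg (b : Bool) : ‖sg b‖ = 1 := by cases b <;> simp [sg]

lemma sg_not (b : Bool) : sg (!b) = - sg b := by cases b <;> simp [sg]

def Rlin (s : Fin 3 → Bool) : E3 →ₗ[ℝ] E3 where
  toFun p := WithLp.toLp 2 (fun i => sg (s i) * p i)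
  map_add' p q := by ext i; simp [mul_add]
  map_smul' c p := by ext i; simp; ring

lemma Rlin_apply (s : Fin 3 → Bool) (p : E3) (i : Fin 3) : Rlin s p i = sg (s i) * p i := rfl

lemma Rlin_invol (s : Fin 3 → Bool) : Function.Involutive (Rlin s) := by
  intro p; ext i
  simp [Rlin_apply, ← mul_assoc, sg_sq]

def R (s : Fin 3 → Bool) : E3 ≃ₗᵢ[ℝ] E3 :=
  { LinearEquiv.ofInvolutive (Rlin s) (Rlin_invol s) with
    norm_map' := by
      intro x
      rw [EuclideanSpace.norm_eq, EuclideanSpace.norm_eq]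
      congr 1
      refine Finset.sum_congr rfl fun i _ => ?_
      show ‖sg (s i) * x i‖ ^ 2 = ‖x i‖ ^ 2
      rw [norm_mul, norm_sg, one_mul] }

lemma R_apply (s : Fin 3 → Bool) (p : E3) (i : Fin 3) : R s p i = sg (s i) * p i := rfl

lemma R_invol (s : Fin 3 → Bool) (p : E3) : R s (R s p) = p := Rlin_invol s p

lemma R_update (s : Fin 3 → Bool) (i : Fin 3) (p : E3) (hp : p i = 0) :
    R (Function.update s i (!(s i))) p = R s p := by
  ext j
  by_cases h : j = i
  · subst h
    show sg (Function.update s j (!(s j)) j) * p j = sg (s j) * p j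
    rw [hp, mul_zero, mul_zero]
  · show sg (Function.update s i (!(s i)) j) * p j = sg (s j) * p j
    rw [Function.update_of_ne h]

def sigma3 (s : Fin 3 → Bool) : ℝ := sg (s 0) * sg (s 1) * sg (s 2)

lemma norm_sigma3 (s : Fin 3 → Bool) : ‖sigma3 s‖ = 1 := by
  rw [sigma3, norm_mul, norm_mul, norm_sg, norm_sg, norm_sg]; norm_num

lemma sigma3_eq_prod (s : Fin 3 → Bool) : sigma3 s = ∏ j : Fin 3, sg (s j) := by
  rw [Fin.prod_univ_three]; rfl

lemma sigma3_update (s : Fin 3 → Bool) (i : Fin 3) :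
    sigma3 (Function.update s i (!(s i))) = - sigma3 s := by
  rw [sigma3_eq_prod, sigma3_eq_prod]
  have hfun : (fun j => sg (Function.update s i (!(s i)) j))
      = Function.update (fun j => sg (s j)) i (sg (!(s i))) := by
    funext j
    by_cases h : j = i
    · subst h; rw [Function.update_self, Function.update_self]
    · rw [Function.update_of_ne h, Function.update_of_ne h]
  calc ∏ j : Fin 3, sg (Function.update s i (!(s i)) j)
      = ∏ j : Fin 3, Function.update (fun j => sg (s j)) i (sg (!(s i))) j :=
        Finset.prod_congr rfl fun j _ => congrFun hfun j
    _ = sg (!(s i)) * ∏ j ∈ Finset.univ \ {i}, sg (s j) :=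
        Finset.prod_update_of_mem (Finset.mem_univ i) _ _
    _ = - (sg (s i) * ∏ j ∈ Finset.univ.erase i, sg (s j)) := by
        rw [← Finset.erase_eq, sg_not]; ring
    _ = - ∏ j : Fin 3, sg (s j) :=
        congrArg Neg.neg (Finset.mul_prod_erase Finset.univ (fun j => sg (s j))
          (Finset.mem_univ i))

lemma cont_proj (i : Fin 3) : Continuous fun p : E3 => p i := by
  exact (EuclideanSpace.proj i).continuous

lemma meas_proj (i : Fin 3) : Measurable fun p : E3 => p i := (cont_proj i).measurable

lemma measT : MeasurableSet {p : E3 | 0 < p 0 ∧ 0 < p 1 ∧ 0 < p 2 ∧ p 0 + p 1 + p 2 = 1} := by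
  simp only [Set.setOf_and]
  refine (MeasurableSet.inter ?_ (MeasurableSet.inter ?_ (MeasurableSet.inter ?_ ?_)))
  · exact measurableSet_lt measurable_const (meas_proj 0)
  · exact measurableSet_lt measurable_const (meas_proj 1)
  · exact measurableSet_lt measurable_const (meas_proj 2)
  · exact measurableSet_eq_fun (((meas_proj 0).add (meas_proj 1)).add (meas_proj 2)) measurable_const

lemma measEdge (i : Fin 3) :
    MeasurableSet {p : E3 | p i = 0 ∧ (∀ j, 0 ≤ p j) ∧ p 0 + p 1 + p 2 = 1} := by
  simp only [Set.setOf_and, Set.setOf_forall]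
  refine (MeasurableSet.inter ?_ (MeasurableSet.inter ?_ ?_))
  · exact measurableSet_eq_fun (meas_proj i) measurable_const
  · exact MeasurableSet.iInter fun j => measurableSet_le measurable_const (meas_proj j)
  · exact measurableSet_eq_fun (((meas_proj 0).add (meas_proj 1)).add (meas_proj 2)) measurable_const

lemma Tfin : μH[2] {p : E3 | 0 < p 0 ∧ 0 < p 1 ∧ 0 < p 2 ∧ p 0 + p 1 + p 2 = 1} < ⊤ := by
  set f : (Fin 2 → ℝ) → E3 := fun u => WithLp.toLp 2 ![u 0, u 1, 1 - u 0 - u 1] with hfdef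
  have hf : LipschitzWith 3 f := by
    apply LipschitzWith.of_dist_le_mul
    intro u v
    have hco : ((3:ℝ≥0):ℝ) = 3 := by norm_num
    rw [hco, EuclideanSpace.dist_eq]
    have h0 : dist (u 0) (v 0) ≤ dist u v := dist_le_pi_dist u v 0
    have h1 : dist (u 1) (v 1) ≤ dist u v := dist_le_pi_dist u v 1
    have hd : (0:ℝ) ≤ dist u v := dist_nonneg
    have h0a : |u 0 - v 0| ≤ dist u v := by rw [Real.dist_eq] at h0; exact h0
    have h1a : |u 1 - v 1| ≤ dist u v := by rw [Real.dist_eq] at h1; exact h1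
    have h0' := abs_sub_le_iff.1 h0a
    have h1' := abs_sub_le_iff.1 h1a
    have e2 : dist (f u 2) (f v 2) ≤ 2 * dist u v := by
      show |(1 - u 0 - u 1) - (1 - v 0 - v 1)| ≤ 2 * dist u v
      rw [abs_sub_le_iff]
      constructor <;> linarith [h0'.1, h0'.2, h1'.1, h1'.2]
    have key : ∑ i : Fin 3, dist (f u i) (f v i) ^ 2 ≤ (3 * dist u v) ^ 2 := by
      rw [Fin.sum_univ_three]
      have e0 : dist (f u 0) (f v 0) = dist (u 0) (v 0) := rfl
      have e1 : dist (f u 1) (f v 1) = dist (u 1) (v 1) := rfl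
      rw [e0, e1]
      have d2 : (0:ℝ) ≤ dist (f u 2) (f v 2) := dist_nonneg
      nlinarith [dist_nonneg (x := u 0) (y := v 0), dist_nonneg (x := u 1) (y := v 1)]
    calc Real.sqrt (∑ i : Fin 3, dist (f u i) (f v i) ^ 2)
        ≤ Real.sqrt ((3 * dist u v) ^ 2) := Real.sqrt_le_sqrt key
      _ = 3 * dist u v := Real.sqrt_sq (by positivity)
  have hsub : {p : E3 | 0 < p 0 ∧ 0 < p 1 ∧ 0 < p 2 ∧ p 0 + p 1 + p 2 = 1}
      ⊆ f '' (Set.univ.pi fun _ : Fin 2 => Icc (0:ℝ) 1) := by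
    rintro p ⟨h0, h1, h2, hs⟩
    refine ⟨![p 0, p 1], fun i _ => ?_, ?_⟩
    · fin_cases i <;> simp <;> constructor <;> linarith
    · ext j
      fin_cases j <;> simp [hfdef] <;> linarith
  have hμ2 : (μH[2] : Measure (Fin 2 → ℝ)) = volume := by
    have h := MeasureTheory.hausdorffMeasure_pi_real (ι := Fin 2)
    rw [Fintype.card_fin] at h
    exact_mod_cast h
  refine lt_of_le_of_lt (le_trans (measure_mono hsub)
    (hf.hausdorffMeasure_image_le (by norm_num) _)) ?_
  rw [hμ2]
  refine ENNReal.mul_lt_top ?_ ?_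
  · exact ENNReal.rpow_lt_top_of_nonneg (by norm_num) (by simp)
  · have : volume (Set.univ.pi fun _ : Fin 2 => Icc (0:ℝ) 1) = 1 := by
      rw [volume_pi_pi]
      simp [Real.volume_Icc]
    rw [this]
    exact ENNReal.one_lt_top

lemma inner_gradient (φ : E3 → ℝ) (p v : E3) :
    (inner ℝ (gradient φ p) v : ℝ) = fderiv ℝ φ p v := by
  rw [← InnerProductSpace.toDual_apply_apply, gradient, LinearIsometryEquiv.apply_symm_apply]

lemma inner_gradient' (φ : E3 → ℝ) (p v : E3) :
    (inner ℝ v (gradient φ p) : ℝ) = fderiv ℝ φ p v := by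
  rw [real_inner_comm]; exact inner_gradient φ p v

lemma inner_grad_comp (s : Fin 3 → Bool) (φ : E3 → ℝ) (hφ : Differentiable ℝ φ) (q w : E3) :
    (inner ℝ w (gradient (φ ∘ (R s)) q) : ℝ) = (inner ℝ (R s w) (gradient φ (R s q)) : ℝ) := by
  have hA : HasFDerivAt (⇑(R s)) ((R s).toContinuousLinearEquiv : E3 →L[ℝ] E3) q :=
    (R s).toContinuousLinearEquiv.hasFDerivAt
  have hd : HasFDerivAt (φ ∘ (R s))
      ((fderiv ℝ φ (R s q)).comp ((R s).toContinuousLinearEquiv : E3 →L[ℝ] E3)) q :=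
    (hφ (R s q)).hasFDerivAt.comp q hA
  rw [inner_gradient', inner_gradient', hd.fderiv]
  rfl

/-- The reflected summand. -/
def Ffun (V : E3 → E3) (Tset : Set E3) (φ : E3 → ℝ) (s : Fin 3 → Bool) : E3 → ℝ :=
  Set.indicator ((R s) ⁻¹' Tset)
    (fun p => sigma3 s * (inner ℝ (R s (V (R s p))) (gradient φ p) : ℝ))

lemma Ffun_apply (V : E3 → E3) (Tset : Set E3) (φ : E3 → ℝ) (s : Fin 3 → Bool) (p : E3) :
    Ffun V Tset φ s p
      = if R s p ∈ Tset then sigma3 s * (inner ℝ (R s (V (R s p))) (gradient φ p) : ℝ) else 0 := by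
  rw [Ffun, Set.indicator_apply]
  rfl

end RFDF

open RFDF

theorem reflected_field_divergence_free
    (V : EuclideanSpace ℝ (Fin 3) → EuclideanSpace ℝ (Fin 3))
    (hVmeas : Measurable V) (M : ℝ) (hVbdd : ∀ p, ‖V p‖ ≤ M)
    (Tset : Set (EuclideanSpace ℝ (Fin 3)))
    (hTset : Tset = {p | 0 < p 0 ∧ 0 < p 1 ∧ 0 < p 2 ∧ p 0 + p 1 + p 2 = 1})
    -- V is tangent to the plane x + y + t = 1 (normal direction (1,1,1)):
    (htang : ∀ p ∈ Tset, V p 0 + V p 1 + V p 2 = 0)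
    (Edge : Fin 3 → Set (EuclideanSpace ℝ (Fin 3)))
    (hEdge : ∀ i, Edge i = {p | p i = 0 ∧ (∀ j, 0 ≤ p j) ∧ p 0 + p 1 + p 2 = 1})
    -- the distributional divergence of 𝟙_T V ℋ² is carried by the boundary,
    -- with flux density g i on the face where the i-th coordinate vanishes:
    (g : Fin 3 → EuclideanSpace ℝ (Fin 3) → ℝ)
    (hflux : ∀ φ : EuclideanSpace ℝ (Fin 3) → ℝ,
      ContDiff ℝ (⊤ : ℕ∞) φ → HasCompactSupport φ →
      ∫ p in Tset, (inner ℝ (V p) (gradient φ p) : ℝ) ∂μH[2]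
        = ∑ i : Fin 3, ∫ p in Edge i, g i p * φ p ∂μH[1])
    -- each g i is even in the i-th variable:
    (heven : ∀ (i : Fin 3) (p : EuclideanSpace ℝ (Fin 3)),
      g i (WithLp.toLp 2 (fun j => if j = i then -(p j) else p j)) = g i p)
    (sgn : Bool → ℝ) (hsgn : sgn = fun s => if s then 1 else -1)
    (U : EuclideanSpace ℝ (Fin 3) → EuclideanSpace ℝ (Fin 3))
    (hU : ∀ (p : EuclideanSpace ℝ (Fin 3)) (j : Fin 3),
      U p j = ∑ s : Fin 3 → Bool,
        (if WithLp.toLp 2 (fun i => sgn (s i) * p i) ∈ Tset then (1:ℝ) else 0) *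
          (sgn (s 0) * sgn (s 1) * sgn (s 2)) * sgn (s j) *
          V (WithLp.toLp 2 (fun i => sgn (s i) * p i)) j)
    (Ω : Set (EuclideanSpace ℝ (Fin 3)))
    (hΩ : Ω = {p | ∃ s : Fin 3 → Bool, WithLp.toLp 2 (fun i => sgn (s i) * p i) ∈ Tset}) :
    -- div (U ℋ²) = 0 in the sense of distributions on ℝ³:
    ∀ φ : EuclideanSpace ℝ (Fin 3) → ℝ,
      ContDiff ℝ (⊤ : ℕ∞) φ → HasCompactSupport φ →
      ∫ p in Ω, (inner ℝ (U p) (gradient φ p) : ℝ) ∂μH[2] = 0 := by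
  intro φ hφ hφc
  have hsg : sgn = RFDF.sg := by funext b; rw [hsgn]; rfl
  rw [hsg] at hU hΩ
  have hR : ∀ (s : Fin 3 → Bool) (p : E3),
      (WithLp.toLp 2 (fun i => RFDF.sg (s i) * p i) : E3) = RFDF.R s p := fun s p => rfl
  simp only [hR] at hU hΩ
  -- basic measurability / finiteness facts
  have hTmeas : MeasurableSet Tset := hTset ▸ measT
  have hTfin : μH[2] Tset < ⊤ := hTset ▸ Tfin
  have hEmeas : ∀ i, MeasurableSet (Edge i) := fun i => (hEdge i) ▸ measEdge i
  have hφd : Differentiable ℝ φ := hφ.differentiable (by simp)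
  -- the gradient of φ is continuous and bounded
  have hgradc : Continuous (gradient φ) := by
    have : Continuous fun x => (InnerProductSpace.toDual ℝ E3).symm (fderiv ℝ φ x) :=
      (InnerProductSpace.toDual ℝ E3).symm.continuous.comp (hφ.continuous_fderiv (by simp))
    exact this
  have hgradsupp : HasCompactSupport (gradient φ) := by
    have h1 : HasCompactSupport (fderiv ℝ φ) := hφc.fderiv ℝ
    have h2 := h1.comp_left (g := ⇑(InnerProductSpace.toDual ℝ E3).symm) (by simp)
    exact h2
  obtain ⟨C, hC⟩ := hgradsupp.exists_bound_of_continuous hgradc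
  have hC0 : 0 ≤ C := le_trans (norm_nonneg _) (hC 0)
  have hM0 : 0 ≤ M := le_trans (norm_nonneg _) (hVbdd 0)
  -- measurability and integrability of each summand
  have hpre_meas : ∀ s : Fin 3 → Bool, MeasurableSet ((R s) ⁻¹' Tset) :=
    fun s => hTmeas.preimage (R s).continuous.measurable
  have hpre_fin : ∀ s : Fin 3 → Bool, μH[2] ((R s) ⁻¹' Tset) < ⊤ := by
    intro s
    have : μH[2] ((R s) ⁻¹' Tset) = μH[2] Tset := by
      have := (R s).toIsometryEquiv.hausdorffMeasure_preimage 2 Tset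
      exact this
    rw [this]; exact hTfin
  have hFmeas : ∀ s : Fin 3 → Bool, Measurable (Ffun V Tset φ s) := by
    intro s
    refine Measurable.indicator ?_ (hpre_meas s)
    refine Measurable.const_mul ?_ _
    refine Measurable.inner ?_ hgradc.measurable
    exact (R s).continuous.measurable.comp (hVmeas.comp (R s).continuous.measurable)
  have hFint : ∀ s : Fin 3 → Bool, Integrable (Ffun V Tset φ s) μH[2] := by
    intro s
    refine Integrable.mono'
      (g := Set.indicator ((R s) ⁻¹' Tset) (fun _ => M * C)) ?_
      (hFmeas s).aestronglyMeasurable ?_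
    · rw [integrable_indicator_iff (hpre_meas s)]
      exact integrableOn_const (hpre_fin s).ne
    · refine Filter.Eventually.of_forall fun p => ?_
      by_cases hp : p ∈ (R s) ⁻¹' Tset
      · rw [Ffun, Set.indicator_of_mem hp, Set.indicator_of_mem hp]
        calc ‖sigma3 s * (inner ℝ (R s (V (R s p))) (gradient φ p) : ℝ)‖
            = ‖sigma3 s‖ * ‖(inner ℝ (R s (V (R s p))) (gradient φ p) : ℝ)‖ := norm_mul _ _
          _ ≤ 1 * (‖R s (V (R s p))‖ * ‖gradient φ p‖) := by
              rw [norm_sigma3, one_mul, one_mul]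
              exact norm_inner_le_norm _ _
          _ ≤ M * C := by
              rw [one_mul, (R s).norm_map]
              exact mul_le_mul (hVbdd _) (hC p) (norm_nonneg _) hM0
      · rw [Ffun, Set.indicator_of_notMem hp, Set.indicator_of_notMem hp]
        simp
  -- Step A: pointwise expansion of the integrand
  have stepA : ∀ p : E3, (inner ℝ (U p) (gradient φ p) : ℝ)
      = ∑ s : Fin 3 → Bool, Ffun V Tset φ s p := by
    intro p
    rw [PiLp.inner_apply]
    simp only [RCLike.inner_apply, conj_trivial, hU, Finset.mul_sum]
    rw [Finset.sum_comm]
    refine Finset.sum_congr rfl fun s _ => ?_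
    rw [Ffun_apply]
    by_cases h : R s p ∈ Tset
    · simp only [if_pos h, one_mul]
      rw [PiLp.inner_apply]
      simp only [RCLike.inner_apply, conj_trivial]
      rw [Finset.mul_sum]
      refine Finset.sum_congr rfl fun j _ => ?_
      rw [R_apply]
      show gradient φ p j * (RFDF.sg (s 0) * RFDF.sg (s 1) * RFDF.sg (s 2) * RFDF.sg (s j)
          * V (R s p) j) = sigma3 s * (gradient φ p j * (RFDF.sg (s j) * V (R s p) j))
      rw [sigma3]; ring
    · simp only [if_neg h]
      simp
  -- Step B: the integral over Ω splits as a sum of full-space integrals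
  have stepB : ∫ p in Ω, (inner ℝ (U p) (gradient φ p) : ℝ) ∂μH[2]
      = ∑ s : Fin 3 → Bool, ∫ p, Ffun V Tset φ s p ∂μH[2] := by
    rw [show (fun p => (inner ℝ (U p) (gradient φ p) : ℝ))
        = fun p => ∑ s : Fin 3 → Bool, Ffun V Tset φ s p from funext stepA]
    rw [integral_finset_sum _ (fun s _ => (hFint s).restrict)]
    refine Finset.sum_congr rfl fun s _ => ?_
    refine setIntegral_eq_integral_of_forall_compl_eq_zero fun p hp => ?_
    have hnm : p ∉ (⇑(R s)) ⁻¹' Tset := fun hmem => hp (by rw [hΩ]; exact ⟨s, hmem⟩)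
    rw [Ffun]
    exact Set.indicator_of_notMem hnm _
  -- Step C: change of variables by the reflection isometry
  have stepC : ∀ s : Fin 3 → Bool, ∫ p, Ffun V Tset φ s p ∂μH[2]
      = sigma3 s * ∑ i : Fin 3, ∫ p in Edge i, g i p * (φ ∘ (R s)) p ∂μH[1] := by
    intro s
    have hmp : MeasurePreserving (R s) (μH[2] : Measure E3) μH[2] :=
      (R s).toIsometryEquiv.measurePreserving_hausdorffMeasure 2
    have hemb : MeasurableEmbedding (⇑(R s)) :=
      (R s).toHomeomorph.measurableEmbedding
    rw [← hmp.integral_comp hemb (Ffun V Tset φ s)]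
    have hptw : ∀ q : E3, Ffun V Tset φ s (R s q)
        = Set.indicator Tset (fun q => sigma3 s * (inner ℝ (V q) (gradient (φ ∘ (R s)) q) : ℝ)) q := by
      intro q
      by_cases h : q ∈ Tset
      · have h' : R s q ∈ (R s) ⁻¹' Tset := by
          rw [Set.mem_preimage, R_invol]; exact h
        rw [Ffun, Set.indicator_of_mem h', Set.indicator_of_mem h, R_invol]
        rw [inner_grad_comp s φ hφd q (V q)]
      · have h' : R s q ∉ (R s) ⁻¹' Tset := by
          rw [Set.mem_preimage, R_invol]; exact h
        rw [Ffun, Set.indicator_of_notMem h', Set.indicator_of_notMem h]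
    rw [show (fun q => Ffun V Tset φ s (R s q))
        = Set.indicator Tset (fun q => sigma3 s * (inner ℝ (V q) (gradient (φ ∘ (R s)) q) : ℝ))
        from funext hptw]
    rw [integral_indicator hTmeas, integral_const_mul]
    congr 1
    have hcd : ContDiff ℝ (⊤ : ℕ∞) (φ ∘ (R s)) := hφ.comp (R s).toContinuousLinearEquiv.contDiff
    have hcs : HasCompactSupport (φ ∘ (R s)) := hφc.comp_homeomorph (R s).toHomeomorph
    exact hflux (φ ∘ (R s)) hcd hcs
  -- Step D: pairwise cancellation of the boundary terms
  rw [stepB]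
  rw [show (fun s => ∫ p, Ffun V Tset φ s p ∂μH[2])
      = fun s => sigma3 s * ∑ i : Fin 3, ∫ p in Edge i, g i p * (φ ∘ (R s)) p ∂μH[1]
      from funext stepC]
  simp only [Finset.mul_sum]
  rw [Finset.sum_comm]
  refine Finset.sum_eq_zero fun i _ => ?_
  set h : (Fin 3 → Bool) → ℝ :=
    fun s => sigma3 s * ∫ p in Edge i, g i p * (φ ∘ (R s)) p ∂μH[1] with hh
  show ∑ s : Fin 3 → Bool, h s = 0
  have hinv : Function.Involutive (fun s : Fin 3 → Bool => Function.update s i (!(s i))) := by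
    intro s
    funext j
    by_cases hj : j = i
    · subst hj; simp [Function.update_self]
    · simp [Function.update_of_ne hj]
  have hneg : ∀ s, h (Function.update s i (!(s i))) = - h s := by
    intro s
    rw [hh]
    simp only
    rw [sigma3_update]
    have : ∫ p in Edge i, g i p * (φ ∘ (R (Function.update s i (!(s i))))) p ∂μH[1]
        = ∫ p in Edge i, g i p * (φ ∘ (R s)) p ∂μH[1] := by
      refine setIntegral_congr_fun (hEmeas i) fun p hp => ?_
      have hpi : p i = 0 := by
        rw [hEdge i] at hp; exact hp.1
      simp only [Function.comp]
      rw [R_update s i p hpi]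
    rw [this]
    ring
  have hsum : ∑ s : Fin 3 → Bool, h s
      = ∑ s : Fin 3 → Bool, h (Function.update s i (!(s i))) :=
    (Function.Bijective.sum_comp hinv.bijective h).symm
  have : ∑ s : Fin 3 → Bool, h s = - ∑ s : Fin 3 → Bool, h s := by
    nth_rewrite 1 [hsum]
    rw [← Finset.sum_neg_distrib]
    exact Finset.sum_congr rfl fun s _ => hneg s
  linarith
end
end
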